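/- arXiv:2505.11382 — 11 statements merged into one kernel-verified Lean document; each statement's English description precedes it below -/
import Mathlib

section
/- Let T = (V,E) be a tree with proper thinness equal to 2. Then there exists a simple path C0 in T such that every connected component of the graph T − V(C0), obtained by deleting the vertices of C0, has proper thinness equal to 1. -/
open SimpleGraph

/-- The degree of a vertex, as the cardinality of its neighbor set. -/
noncomputable def deg {V : Type*} (G : SimpleGraph V) (v : V) : ℕ :=
  (G.neighborSet v).ncard

/-- A linear ordering (given by an injective `σ : V → ℕ`) and a partition into classes
(given by a coloring `c : V → ℕ`) are strongly consistent for `G` if for every triple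
`r < s < t`: if `r,s` are in the same class and `t` is adjacent to `r` then `t` is adjacent
to `s`, and if `s,t` are in the same class and `t` is adjacent to `r` then `r` is adjacent
to `s`. -/
def StronglyConsistent {V : Type*} (G : SimpleGraph V) (σ : V → ℕ) (c : V → ℕ) : Prop :=
  ∀ r s t : V, σ r < σ s → σ s < σ t →
    (c r = c s → G.Adj t r → G.Adj t s) ∧ (c s = c t → G.Adj t r → G.Adj r s)

/-- A graph is proper `k`-thin if there are an ordering of its vertices and a partition of
its vertices into `k` classes that are strongly consistent. -/
def ProperKThin {V : Type*} (G : SimpleGraph V) (k : ℕ) : Prop :=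
  ∃ (σ : V → ℕ) (c : V → ℕ), Function.Injective σ ∧ (∀ v, c v < k) ∧
    StronglyConsistent G σ c

/-- The proper thinness of a graph: the least `k` such that the graph is proper `k`-thin. -/
noncomputable def pthin {V : Type*} (G : SimpleGraph V) : ℕ :=
  sInf {k | ProperKThin G k}

section Aux

variable {V : Type*} [DecidableEq V] {T : SimpleGraph V} {σ c : V → ℕ}

/-- Trees have no triangles. -/
private lemma no_tri (hT : T.IsTree) {a b d : V} (h1 : T.Adj a b) (h2 : T.Adj b d)
    (h3 : T.Adj a d) : False := by
  have hun := (SimpleGraph.isAcyclic_iff_path_unique).mp hT.IsAcyclic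
  have hp1 : (SimpleGraph.Walk.cons h3 SimpleGraph.Walk.nil).IsPath := by
    simp [SimpleGraph.Walk.isPath_def, h3.ne]
  have hp2 : (SimpleGraph.Walk.cons h1 (SimpleGraph.Walk.cons h2 SimpleGraph.Walk.nil)).IsPath := by
    simp [SimpleGraph.Walk.isPath_def, h1.ne, h2.ne, h3.ne]
  have := hun ⟨_, hp1⟩ ⟨_, hp2⟩
  have hl := congrArg (fun p : T.Path a d => p.1.length) this
  simp at hl

private lemma E1' (hsc : StronglyConsistent T σ c) {u w x : V} (huw : T.Adj u w)
    (h1 : σ u < σ x) (h2 : σ x < σ w) (hcx : c x = c u) : T.Adj w x :=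
  (hsc u x w h1 h2).1 hcx.symm huw.symm

private lemma E2' (hsc : StronglyConsistent T σ c) {u w x : V} (huw : T.Adj u w)
    (h1 : σ u < σ x) (h2 : σ x < σ w) (hcx : c x = c w) : T.Adj u x :=
  (hsc u x w h1 h2).2 hcx huw.symm

/-- If an edge has both endpoints of the same class as an in-between vertex, triangle. -/
private lemma E3T (hT : T.IsTree) (hsc : StronglyConsistent T σ c) {u w x : V}
    (huw : T.Adj u w) (h1 : σ u < σ x) (h2 : σ x < σ w) (hcu : c x = c u)
    (hcw : c x = c w) : False :=
  no_tri hT huw (E1' hsc huw h1 h2 hcu) (E2' hsc huw h1 h2 hcw)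

/-- Along a walk whose endpoints' σ-values straddle `σ x`, some edge of the walk
straddles `σ x`. -/
private lemma straddle {x : V} : ∀ {a b : V} (W : T.Walk a b), σ a < σ x → σ x < σ b →
    (∀ y ∈ W.support, σ y ≠ σ x) →
    ∃ α β, T.Adj α β ∧ α ∈ W.support ∧ β ∈ W.support ∧ σ α < σ x ∧ σ x < σ β := by
  intro a b W
  induction W with
  | nil =>
    intro h1 h2 _
    exact absurd (h1.trans h2) (lt_irrefl _)
  | @cons a d b hadj p ih =>
    intro h1 h2 hsup
    have hd : σ d ≠ σ x := hsup d (by simp)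
    rcases lt_or_gt_of_ne hd with hlt | hgt
    · obtain ⟨α, β, ha, hm1, hm2, ho1, ho2⟩ :=
        ih hlt h2 (fun y hy => hsup y (by simp [hy]))
      exact ⟨α, β, ha, by simp [hm1], by simp [hm2], ho1, ho2⟩
    · exact ⟨a, d, hadj, by simp, by simp, h1, hgt⟩

/-- Straddling edge on the `v1`–`vn` walk, for a vertex off its support. -/
private lemma straddleP {v1 vn : V} (C0 : T.Walk v1 vn) (hσ : Function.Injective σ)
    (hmin : ∀ v, σ v1 ≤ σ v) (hmax : ∀ v, σ v ≤ σ vn) {x : V} (hx : x ∉ C0.support) :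
    ∃ α β, T.Adj α β ∧ α ∈ C0.support ∧ β ∈ C0.support ∧ σ α < σ x ∧ σ x < σ β := by
  have h1 : σ v1 < σ x := by
    refine lt_of_le_of_ne (hmin x) (fun e => hx ?_)
    rw [← hσ e]; exact C0.start_mem_support
  have h2 : σ x < σ vn := by
    refine lt_of_le_of_ne (hmax x) (fun e => hx ?_)
    rw [hσ e]; exact C0.end_mem_support
  exact straddle C0 h1 h2 (fun y hy e => hx (hσ e ▸ hy))

private lemma exists_walk_support {a b : V} (W : T.Walk a b) {x y : V}
    (hx : x ∈ W.support) (hy : y ∈ W.support) :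
    ∃ Q : T.Walk x y, ∀ z ∈ Q.support, z ∈ W.support := by
  by_cases h : y ∈ (W.dropUntil x hx).support
  · exact ⟨(W.dropUntil x hx).takeUntil y h, fun z hz =>
      W.support_dropUntil_subset hx (SimpleGraph.Walk.support_takeUntil_subset _ h hz)⟩
  · have hy' : y ∈ (W.takeUntil x hx).support := by
      have hsp := SimpleGraph.Walk.take_spec W hx
      rw [← hsp] at hy
      exact ((SimpleGraph.Walk.mem_support_append_iff _ _).mp hy).resolve_right h
    have hy'' : y ∈ (W.takeUntil x hx).reverse.support := by
      simpa [SimpleGraph.Walk.support_reverse] using hy'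
    refine ⟨(W.takeUntil x hx).reverse.takeUntil y hy'', fun z hz => ?_⟩
    have := SimpleGraph.Walk.support_takeUntil_subset _ hy'' hz
    rw [SimpleGraph.Walk.support_reverse, List.mem_reverse] at this
    exact W.support_takeUntil_subset hx this

/-- A connected off-walk pair cannot send two edges to the walk (acyclicity). -/
private lemma attach (hT : T.IsTree) {v1 vn : V} (C0 : T.Walk v1 vn) {u w pu pw : V}
    (hu : u ∉ C0.support) (hw : w ∉ C0.support) (hpu : pu ∈ C0.support)
    (hpw : pw ∈ C0.support) (huw : T.Adj u w) (h1 : T.Adj u pu) (h2 : T.Adj w pw) :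
    False := by
  by_cases hpp : pu = pw
  · subst hpp
    exact no_tri hT huw h2 h1
  · obtain ⟨Q, hQ⟩ := exists_walk_support C0 hpu hpw
    have hun := (SimpleGraph.isAcyclic_iff_path_unique).mp hT.IsAcyclic
    have hnupu : pu ≠ u := fun e => hu (e ▸ hpu)
    have hnupw : pw ≠ u := fun e => hu (e ▸ hpw)
    have hnwpu : pu ≠ w := fun e => hw (e ▸ hpu)
    have hnwpw : pw ≠ w := fun e => hw (e ▸ hpw)
    have hp1 : (SimpleGraph.Walk.cons h1.symm (SimpleGraph.Walk.cons huw
        (SimpleGraph.Walk.cons h2 SimpleGraph.Walk.nil))).IsPath := by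
      simp [SimpleGraph.Walk.isPath_def, hnupu, hnwpu, hpp, huw.ne, hnupw.symm, hnwpw.symm]
    have heq := hun ⟨_, hp1⟩ Q.toPath
    have hmem : u ∈ ((⟨_, hp1⟩ : T.Path pu pw) : T.Path pu pw).1.support := by simp
    rw [heq] at hmem
    have : u ∈ Q.support := SimpleGraph.Walk.support_bypass_subset _ hmem
    exact hu (hQ u this)

/-- Lemma A: an edge off the min–max walk cannot have endpoints of different classes. -/
private lemma lemA (hT : T.IsTree) (hσ : Function.Injective σ) (hc2 : ∀ v, c v < 2)
    (hsc : StronglyConsistent T σ c) {v1 vn : V} (C0 : T.Walk v1 vn)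
    (hmin : ∀ v, σ v1 ≤ σ v) (hmax : ∀ v, σ v ≤ σ vn) {u w : V}
    (hu : u ∉ C0.support) (hw : w ∉ C0.support) (huw : T.Adj u w)
    (hlt : σ u < σ w) (hne : c u ≠ c w) : False := by
  have step1 : ∃ p ∈ C0.support, T.Adj u p := by
    obtain ⟨α, β, hαβ, hαs, hβs, hα, hβ⟩ := straddleP C0 hσ hmin hmax hu
    by_cases hab : c α = c β
    · have hcu : c u ≠ c α := fun he => E3T hT hsc hαβ hα hβ he (he.trans hab)
      have hcw : c w = c α := by
        have := hc2 u; have := hc2 w; have := hc2 α; omega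
      have hβw : σ β ≠ σ w := fun e => hw (hσ e ▸ hβs)
      rcases lt_or_gt_of_ne hβw with h | h
      · exact ⟨β, hβs, E2' hsc huw hβ h ((hab.symm).trans hcw.symm)⟩
      · exact absurd (E3T hT hsc hαβ (hα.trans hlt) h hcw (hcw.trans hab)) id
    · have hcase : c u = c α ∨ c u = c β := by
        have := hc2 u; have := hc2 α; have := hc2 β; omega
      rcases hcase with h | h
      · exact ⟨β, hβs, (E1' hsc hαβ hα hβ h).symm⟩
      · exact ⟨α, hαs, (E2' hsc hαβ hα hβ h).symm⟩
  have step2 : ∃ p ∈ C0.support, T.Adj w p := by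
    obtain ⟨a, b, hab', has, hbs, ha, hb⟩ := straddleP C0 hσ hmin hmax hw
    by_cases hab : c a = c b
    · have hcw : c w ≠ c a := fun he => E3T hT hsc hab' ha hb he (he.trans hab)
      have hcu : c u = c a := by
        have := hc2 u; have := hc2 w; have := hc2 a; omega
      have hau : σ a ≠ σ u := fun e => hu (hσ e ▸ has)
      rcases lt_or_gt_of_ne hau with h | h
      · exact absurd (E3T hT hsc hab' h (hlt.trans hb) hcu (hcu.trans hab)) id
      · exact ⟨a, has, E1' hsc huw h ha hcu.symm⟩
    · have hcase : c w = c a ∨ c w = c b := by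
        have := hc2 w; have := hc2 a; have := hc2 b; omega
      rcases hcase with h | h
      · exact ⟨b, hbs, (E1' hsc hab' ha hb h).symm⟩
      · exact ⟨a, has, (E2' hsc hab' ha hb h).symm⟩
  obtain ⟨pu, hpus, hupu⟩ := step1
  obtain ⟨pw, hpws, hwpw⟩ := step2
  exact attach hT C0 hu hw hpus hpws huw hupu hwpw

/-- Lemma B: an off-walk edge with same-class endpoints has no off-walk vertex
σ-between its endpoints. -/
private lemma lemB (hT : T.IsTree) (hσ : Function.Injective σ) (hc2 : ∀ v, c v < 2)
    (hsc : StronglyConsistent T σ c) {v1 vn : V} (C0 : T.Walk v1 vn)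
    (hmin : ∀ v, σ v1 ≤ σ v) (hmax : ∀ v, σ v ≤ σ vn) {u w s : V}
    (hu : u ∉ C0.support) (hw : w ∉ C0.support) (hs : s ∉ C0.support)
    (huw : T.Adj u w) (hlt : σ u < σ w) (heq : c u = c w)
    (hs1 : σ u < σ s) (hs2 : σ s < σ w) : False := by
  have hsu : c s ≠ c u := fun he => E3T hT hsc huw hs1 hs2 he (he.trans heq)
  obtain ⟨α, β, hαβ, hαs, hβs, hα, hβ⟩ := straddleP C0 hσ hmin hmax hs
  by_cases hab : c α = c β
  · have hsα : c s ≠ c α := fun he => E3T hT hsc hαβ hα hβ he (he.trans hab)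
    have hαu : c α = c u := by
      have := hc2 s; have := hc2 u; have := hc2 α; omega
    have hnσ : σ α ≠ σ u := fun e => hu (hσ e ▸ hαs)
    rcases lt_or_gt_of_ne hnσ with h | h
    · exact E3T hT hsc hαβ h (hs1.trans hβ) hαu.symm (hαu.symm.trans hab)
    · exact E3T hT hsc huw h (hα.trans hs2) hαu (hαu.trans heq)
  · have hcase : c s = c α ∨ c s = c β := by
      have := hc2 s; have := hc2 α; have := hc2 β; omega
    rcases hcase with h | h
    · have hadjsβ : T.Adj s β := (E1' hsc hαβ hα hβ h).symm
      have hβu : c β = c u := by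
        have := hc2 s; have := hc2 u; have := hc2 α; have := hc2 β; omega
      have hnσ : σ β ≠ σ w := fun e => hw (hσ e ▸ hβs)
      rcases lt_or_gt_of_ne hnσ with hh | hh
      · exact E3T hT hsc huw (hs1.trans hβ) hh hβu (hβu.trans heq)
      · have hsw : T.Adj s w := E2' hsc hadjsβ hs2 hh (heq.symm.trans hβu.symm)
        exact lemA hT hσ hc2 hsc C0 hmin hmax hs hw hsw hs2
          (fun e => hsu (e.trans heq.symm))
    · have hadjαs : T.Adj α s := E2' hsc hαβ hα hβ h
      have hαu : c α = c u := by
        have := hc2 s; have := hc2 u; have := hc2 α; have := hc2 β; omega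
      have hnσ : σ α ≠ σ u := fun e => hu (hσ e ▸ hαs)
      rcases lt_or_gt_of_ne hnσ with hh | hh
      · have hadjsu : T.Adj s u := E1' hsc hadjαs hh hs1 hαu.symm
        exact lemA hT hσ hc2 hsc C0 hmin hmax hu hs hadjsu.symm hs1
          (fun e => hsu e.symm)
      · exact E3T hT hsc huw hh (hα.trans hs2) hαu (hαu.trans heq)

/-- Main combinatorial lemma: no off-walk edge σ-straddles an off-walk vertex. -/
private lemma mainH (hT : T.IsTree) (hσ : Function.Injective σ) (hc2 : ∀ v, c v < 2)
    (hsc : StronglyConsistent T σ c) {v1 vn : V} (C0 : T.Walk v1 vn)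
    (hmin : ∀ v, σ v1 ≤ σ v) (hmax : ∀ v, σ v ≤ σ vn) {r s t : V}
    (hr : r ∉ C0.support) (hs : s ∉ C0.support) (ht : t ∉ C0.support)
    (hrt : T.Adj r t) (h1 : σ r < σ s) (h2 : σ s < σ t) : False := by
  by_cases h : c r = c t
  · exact lemB hT hσ hc2 hsc C0 hmin hmax hr ht hs hrt (h1.trans h2) h h1 h2
  · exact lemA hT hσ hc2 hsc C0 hmin hmax hr ht hrt (h1.trans h2) h

end Aux

/-- If a tree has proper thinness 2, then there is a simple path `C0` such that every
connected component of the graph obtained by deleting the vertices of `C0` has proper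
thinness equal to 1. -/
theorem tree_pthin_two_components_pthin_one {V : Type*} [Fintype V]
    (T : SimpleGraph V) (hT : T.IsTree) (h2 : pthin T = 2) :
    ∃ (a b : V) (C0 : T.Walk a b), C0.IsPath ∧
      ∀ K : (T.induce {v : V | v ∉ C0.support}).ConnectedComponent,
        pthin ((T.induce {v : V | v ∉ C0.support}).induce K.supp) = 1 := by
  classical
  have hne : {k | ProperKThin T k}.Nonempty := by
    by_contra h
    rw [Set.not_nonempty_iff_eq_empty] at h
    have : pthin T = 0 := by rw [pthin, h, Nat.sInf_empty]
    omega
  have hpk : ProperKThin T 2 := by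
    have := Nat.sInf_mem hne
    rwa [show sInf {k | ProperKThin T k} = pthin T from rfl, h2] at this
  obtain ⟨σ, c, hσ, hc2, hsc⟩ := hpk
  have hnV : Nonempty V := hT.isConnected.nonempty
  obtain ⟨v1, -, hmin⟩ := Finset.exists_min_image Finset.univ σ
    ⟨Classical.arbitrary V, Finset.mem_univ _⟩
  obtain ⟨vn, -, hmax⟩ := Finset.exists_max_image Finset.univ σ
    ⟨Classical.arbitrary V, Finset.mem_univ _⟩
  have hmin' : ∀ v, σ v1 ≤ σ v := fun v => hmin v (Finset.mem_univ v)
  have hmax' : ∀ v, σ v ≤ σ vn := fun v => hmax v (Finset.mem_univ v)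
  obtain ⟨W⟩ := hT.isConnected.preconnected v1 vn
  refine ⟨v1, vn, W.bypass, W.bypass_isPath, ?_⟩
  intro K
  have key : ∀ (x y z : V), x ∉ W.bypass.support → y ∉ W.bypass.support →
      z ∉ W.bypass.support → T.Adj x z → σ x < σ y → σ y < σ z → False :=
    fun x y z hx hy hz hxz ha hb =>
      mainH hT hσ hc2 hsc W.bypass hmin' hmax' hx hy hz hxz ha hb
  have hP1 : ProperKThin ((T.induce {v : V | v ∉ W.bypass.support}).induce K.supp) 1 := by
    refine ⟨fun x => σ x.1.1, fun _ => 0, ?_, fun _ => Nat.one_pos, ?_⟩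
    · intro a b h
      exact Subtype.ext (Subtype.ext (hσ h))
    · intro r s t ha hb
      have hkey : ¬ ((T.induce {v : V | v ∉ W.bypass.support}).induce K.supp).Adj t r := by
        intro hadj
        have hadj' : T.Adj (t.1.1) (r.1.1) := hadj
        exact key r.1.1 s.1.1 t.1.1 r.1.2 s.1.2 t.1.2 hadj'.symm ha hb
      exact ⟨fun _ h => absurd h hkey, fun _ h => absurd h hkey⟩
  have hP0 : ¬ ProperKThin ((T.induce {v : V | v ∉ W.bypass.support}).induce K.supp) 0 := by
    rintro ⟨σ0, c0, -, hlt0, -⟩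
    obtain ⟨v, hv⟩ := K.exists_rep
    exact absurd (hlt0 ⟨v, (SimpleGraph.ConnectedComponent.mem_supp_iff K v).mpr hv⟩)
      (Nat.not_lt_zero _)
  have hle : pthin ((T.induce {v : V | v ∉ W.bypass.support}).induce K.supp) ≤ 1 :=
    Nat.sInf_le hP1
  have hn0 : pthin ((T.induce {v : V | v ∉ W.bypass.support}).induce K.supp) ≠ 0 := by
    intro h0
    rcases Nat.sInf_eq_zero.mp h0 with h | h
    · exact hP0 h
    · have h1m : (1:ℕ) ∈ {k | ProperKThin
        ((T.induce {v : V | v ∉ W.bypass.support}).induce K.supp) k} := hP1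
      rw [h] at h1m
      exact h1m
  omega
end

section
/- Let T = (V,E) be a tree, let σ be a linear ordering of V and let S = {V^1, ..., V^k} be a partition of V such that σ and S are strongly consistent. Let v be a vertex of T with v ∈ V^i. Then v has at most two neighbors in V^i; moreover, v cannot have two neighbors in V^i that both precede v in σ, nor two neighbors in V^i that both follow v in σ. -/
open SimpleGraph

lemma no_triangle {V : Type*} {G : SimpleGraph V} (hG : G.IsAcyclic)
    {a b c : V} (hab : G.Adj a b) (hbc : G.Adj b c) (hca : G.Adj c a) : False := by
  have hac : a ≠ c := fun h => (h ▸ hca).ne rfl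
  apply hG (Walk.cons hab (Walk.cons hbc (Walk.cons hca Walk.nil)))
  simp [Walk.isCycle_def, Walk.isTrail_def, hab.ne, hbc.ne, hca.ne, hac, hab.ne', hbc.ne',
    hca.ne', hac.symm, Sym2.eq, Sym2.rel_iff']

lemma no_two_before {V : Type*} {T : SimpleGraph V} (hA : T.IsAcyclic)
    {σ : V → ℕ} (hσ : Function.Injective σ) {c : V → ℕ}
    (hsc : StronglyConsistent T σ c) (v : V) :
    ¬ ∃ u w : V, u ≠ w ∧ T.Adj v u ∧ T.Adj v w ∧ c u = c v ∧ c w = c v ∧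
        σ u < σ v ∧ σ w < σ v := by
  rintro ⟨u, w, huw, hvu, hvw, hcu, hcw, hu, hw⟩
  have hne : σ u ≠ σ w := fun h => huw (hσ h)
  rcases hne.lt_or_gt with h | h
  · exact no_triangle hA hvu ((hsc u w v h hw).2 hcw hvu) hvw.symm
  · exact no_triangle hA hvw ((hsc w u v h hu).2 hcu hvw) hvu.symm

lemma no_two_after {V : Type*} {T : SimpleGraph V} (hA : T.IsAcyclic)
    {σ : V → ℕ} (hσ : Function.Injective σ) {c : V → ℕ}
    (hsc : StronglyConsistent T σ c) (v : V) :
    ¬ ∃ u w : V, u ≠ w ∧ T.Adj v u ∧ T.Adj v w ∧ c u = c v ∧ c w = c v ∧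
        σ v < σ u ∧ σ v < σ w := by
  rintro ⟨u, w, huw, hvu, hvw, hcu, hcw, hu, hw⟩
  have hne : σ u ≠ σ w := fun h => huw (hσ h)
  rcases hne.lt_or_gt with h | h
  · exact no_triangle hA hvu (((hsc v u w hu h).1 hcu.symm hvw.symm).symm) hvw.symm
  · exact no_triangle hA hvw (((hsc v w u hw h).1 hcw.symm hvu.symm).symm) hvu.symm

/-- In a tree with a strongly consistent ordering and partition into `k` classes, every
vertex has at most two neighbors in its own class, and cannot have two neighbors in its
own class both preceding it, nor two both following it, in the ordering. -/
theorem same_class_neighbors {V : Type*} [Fintype V]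
    (T : SimpleGraph V) (hT : T.IsTree)
    (σ : V → ℕ) (hσ : Function.Injective σ) (k : ℕ) (c : V → ℕ)
    (hc : ∀ v, c v < k) (hsc : StronglyConsistent T σ c) (v : V) :
    ({w : V | T.Adj v w ∧ c w = c v}).ncard ≤ 2 ∧
    (¬ ∃ u w : V, u ≠ w ∧ T.Adj v u ∧ T.Adj v w ∧ c u = c v ∧ c w = c v ∧
        σ u < σ v ∧ σ w < σ v) ∧
    (¬ ∃ u w : V, u ≠ w ∧ T.Adj v u ∧ T.Adj v w ∧ c u = c v ∧ c w = c v ∧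
        σ v < σ u ∧ σ v < σ w) := by
  have hA : T.IsAcyclic := hT.IsAcyclic
  refine ⟨?_, no_two_before hA hσ hsc v, no_two_after hA hσ hsc v⟩
  set S : Set V := {w : V | T.Adj v w ∧ c w = c v} with hS
  have hsub : S ⊆ {w ∈ S | σ w < σ v} ∪ {w ∈ S | σ v < σ w} := by
    intro w hw
    have hne : σ w ≠ σ v := fun h => hw.1.ne' (hσ h)
    rcases hne.lt_or_gt with h | h
    · exact Or.inl ⟨hw, h⟩
    · exact Or.inr ⟨hw, h⟩
  have h1 : ({w ∈ S | σ w < σ v} : Set V).ncard ≤ 1 := by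
    rw [Set.ncard_le_one (Set.toFinite _)]
    rintro a ⟨⟨ha1, ha2⟩, ha3⟩ b ⟨⟨hb1, hb2⟩, hb3⟩
    by_contra hab
    exact no_two_before hA hσ hsc v ⟨a, b, hab, ha1, hb1, ha2, hb2, ha3, hb3⟩
  have h2 : ({w ∈ S | σ v < σ w} : Set V).ncard ≤ 1 := by
    rw [Set.ncard_le_one (Set.toFinite _)]
    rintro a ⟨⟨ha1, ha2⟩, ha3⟩ b ⟨⟨hb1, hb2⟩, hb3⟩
    by_contra hab
    exact no_two_after hA hσ hsc v ⟨a, b, hab, ha1, hb1, ha2, hb2, ha3, hb3⟩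
  calc S.ncard ≤ ({w ∈ S | σ w < σ v} ∪ {w ∈ S | σ v < σ w} : Set V).ncard :=
        Set.ncard_le_ncard hsub (Set.toFinite _)
    _ ≤ _ + _ := Set.ncard_union_le _ _
    _ ≤ 2 := by omega
end

section
/- Let T = (V,E) be a tree, let σ be a linear ordering of V and let S = {V^0, V^1} be a partition of V into two classes such that σ and S are strongly consistent. Let v ∈ V^0 and let w1, w2, w3 be three neighbors of v belonging to V^1 with w1 < w2 < w3 in σ. Then w2 has degree 1 in T. -/
open SimpleGraph

lemma no_tri_s8 {V : Type*} {G : SimpleGraph V} (hA : G.IsAcyclic) {a b c : V}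
    (hab : G.Adj a b) (hbc : G.Adj b c) (hca : G.Adj c a) : False := by
  rw [isAcyclic_iff_path_unique] at hA
  have hp1 : (Walk.cons hca.symm Walk.nil : G.Walk a c).IsPath := by
    simp [Walk.isPath_def, hca.ne']
  have hp2 : (Walk.cons hab (Walk.cons hbc Walk.nil) : G.Walk a c).IsPath := by
    simp [Walk.isPath_def, hab.ne, hbc.ne, hca.ne']
  have key := hA ⟨_, hp1⟩ ⟨_, hp2⟩
  have := congrArg (fun p : G.Path a c => p.1.length) key
  simp at this

lemma no_sq {V : Type*} {G : SimpleGraph V} (hA : G.IsAcyclic) {a b c d : V}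
    (hbd : b ≠ d) (hac : a ≠ c)
    (hab : G.Adj a b) (hbc : G.Adj b c) (hcd : G.Adj c d) (hda : G.Adj d a) : False := by
  rw [isAcyclic_iff_path_unique] at hA
  have hp1 : (Walk.cons hab (Walk.cons hbc Walk.nil) : G.Walk a c).IsPath := by
    simp [Walk.isPath_def, hab.ne, hbc.ne, hac]
  have hp2 : (Walk.cons hda.symm (Walk.cons hcd.symm Walk.nil) : G.Walk a c).IsPath := by
    simp [Walk.isPath_def, hda.ne', hcd.ne', hac]
  have key := hA ⟨_, hp1⟩ ⟨_, hp2⟩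
  have := congrArg (fun p : G.Path a c => p.1.support) key
  simp at this
  exact hbd this

/-- In a tree with a strongly consistent ordering and partition into two classes, if
`v` is in class `0` and `w1 < w2 < w3` are three neighbors of `v` in class `1`, then
`w2` has degree 1. -/
theorem middle_neighbor_other_class_degree_one {V : Type*} [Fintype V]
    (T : SimpleGraph V) (hT : T.IsTree)
    (σ : V → ℕ) (hσ : Function.Injective σ) (c : V → ℕ) (hc : ∀ v, c v < 2)
    (hsc : StronglyConsistent T σ c)
    (v w1 w2 w3 : V) (hv : c v = 0)
    (h1 : T.Adj v w1) (h2 : T.Adj v w2) (h3 : T.Adj v w3)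
    (hc1 : c w1 = 1) (hc2 : c w2 = 1) (hc3 : c w3 = 1)
    (ho1 : σ w1 < σ w2) (ho2 : σ w2 < σ w3) :
    deg T w2 = 1 := by
  
  have hA := hT.IsAcyclic
  have hw12 : w1 ≠ w2 := fun h => by rw [h] at ho1; exact lt_irrefl _ ho1
  have hw23 : w2 ≠ w3 := fun h => by rw [h] at ho2; exact lt_irrefl _ ho2
  have hset : T.neighborSet w2 = {v} := by
    ext x
    simp only [mem_neighborSet, Set.mem_singleton_iff]
    constructor
    · intro hx
      by_contra hxv
      -- x ≠ w1, x ≠ w3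
      have hxw1 : x ≠ w1 := by
        rintro rfl; exact no_tri_s8 hA h1 hx.symm h2.symm
      have hxw3 : x ≠ w3 := by
        rintro rfl; exact no_tri_s8 hA h2 hx h3.symm
      rcases lt_trichotomy (σ x) (σ w1) with hlt | heq | hgt
      · -- x < w1 : get Adj x w1, square v-w1-x-w2
        have hadj : T.Adj x w1 := (hsc x w1 w2 hlt ho1).2 (hc1.trans hc2.symm) hx
        exact no_sq hA hw12 (Ne.symm hxv) h1 hadj.symm hx.symm h2.symm
      · exact hxw1 (hσ heq)
      · rcases lt_trichotomy (σ w3) (σ x) with hlt3 | heq3 | hgt3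
        · -- x > w3 : get Adj x w3, square v-w2-x-w3
          have hadj : T.Adj x w3 := (hsc w2 w3 x ho2 hlt3).1 (hc2.trans hc3.symm) hx.symm
          exact no_sq hA hw23 (Ne.symm hxv) h2 hx hadj h3.symm
        · exact hxw3 (hσ heq3.symm)
        · -- w1 < x < w3
          have hcx : c x = 0 ∨ c x = 1 := by have := hc x; omega
          have hvx : σ v ≠ σ x := fun h => hxv (hσ h.symm)
          rcases hcx with hcx | hcx
          · rcases lt_or_gt_of_ne hvx with hvlt | hvgt
            · -- v < x, c x = 0 : Adj w3 x, square v-w2-x-w3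
              have hadj : T.Adj w3 x := (hsc v x w3 hvlt hgt3).1 (hv.trans hcx.symm) h3.symm
              exact no_sq hA hw23 (Ne.symm hxv) h2 hx hadj.symm h3.symm
            · -- x < v, c x = 0 : Adj w1 x, square v-w1-x-w2
              have hadj : T.Adj w1 x := (hsc w1 x v hgt hvgt).2 (hcx.trans hv.symm) h1
              exact no_sq hA hw12 (Ne.symm hxv) h1 hadj hx.symm h2.symm
          · rcases lt_or_gt_of_ne hvx with hvlt | hvgt
            · -- v < x, c x = 1 : Adj v x, triangle v-x-w2
              have hadj : T.Adj v x := (hsc v x w3 hvlt hgt3).2 (hcx.trans hc3.symm) h3.symm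
              exact no_tri_s8 hA hadj hx.symm h2.symm
            · -- x < v, c x = 1 : Adj v x, triangle v-x-w2
              have hadj : T.Adj v x := (hsc w1 x v hgt hvgt).1 (hc1.trans hcx.symm) h1
              exact no_tri_s8 hA hadj hx.symm h2.symm
    · rintro rfl
      exact h2.symm
  rw [deg, hset, Set.ncard_singleton]
end

section
/- Let T = (V,E) be a tree, let σ be a linear ordering of V and let S = {V^0, V^1} be a partition of V into two classes such that σ and S are strongly consistent. Let v0 ∈ V^0 and v1 ∈ V^1 be adjacent vertices, let u be a vertex that is before the edge v0v1 in σ, and let w be a vertex that is after the edge v0v1 in σ. Then every path in T from u to w passes through v0 or through v1. -/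
open SimpleGraph

/-- In a tree with a strongly consistent ordering and partition into two classes, if
`v0 ∈ V^0` and `v1 ∈ V^1` are adjacent, `u` is before the edge `v0v1` and `w` is after
the edge `v0v1`, then every path from `u` to `w` passes through `v0` or `v1`. -/
theorem path_crosses_edge {V : Type*} [Fintype V]
    (T : SimpleGraph V) (hT : T.IsTree)
    (σ : V → ℕ) (hσ : Function.Injective σ) (c : V → ℕ) (hc : ∀ v, c v < 2)
    (hsc : StronglyConsistent T σ c)
    (v0 v1 : V) (hc0 : c v0 = 0) (hc1 : c v1 = 1) (hadj : T.Adj v0 v1)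
    (u w : V) (hu0 : u ≠ v0) (hu1 : u ≠ v1) (hw0 : w ≠ v0) (hw1 : w ≠ v1)
    (hbefore : (c u = 0 ∧ σ u < σ v0) ∨ (c u = 1 ∧ σ u < σ v1))
    (hafter : (c w = 0 ∧ σ v0 < σ w) ∨ (c w = 1 ∧ σ v1 < σ w)) :
    ∀ p : T.Walk u w, v0 ∈ p.support ∨ v1 ∈ p.support := by
  intro p
  by_contra hcon
  push_neg at hcon
  obtain ⟨hp0, hp1⟩ := hcon
  -- uniqueness of paths in a tree
  have no2 : ∀ (a b : V) (p q : T.Walk a b), p.IsPath → q.IsPath →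
      p.length ≠ q.length → False := by
    intro a b p q hp hq hne
    obtain ⟨P, _, hu⟩ := hT.existsUnique_path a b
    exact hne (by rw [hu p hp, hu q hq])
  -- the key lemma: no edge from a "before" vertex to an "after" vertex avoiding v0, v1
  have key : ∀ x y : V, T.Adj x y → x ≠ v0 → x ≠ v1 → y ≠ v0 → y ≠ v1 →
      ((c x = 0 ∧ σ x < σ v0) ∨ (c x = 1 ∧ σ x < σ v1)) →
      ((c y = 0 ∧ σ v0 < σ y) ∨ (c y = 1 ∧ σ v1 < σ y)) → False := by
    intro x y hxy hx0 hx1 hy0 hy1 hbx hay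
    have hne01 : v0 ≠ v1 := hadj.ne
    rcases hbx with ⟨hcx, hltx⟩ | ⟨hcx, hltx⟩ <;> rcases hay with ⟨hcy, hlty⟩ | ⟨hcy, hlty⟩
    · -- c x = 0, c y = 0 : triangle x v0 y
      have e1 : T.Adj y v0 := (hsc x v0 y hltx hlty).1 (by rw [hcx, hc0]) hxy.symm
      have e2 : T.Adj x v0 := (hsc x v0 y hltx hlty).2 (by rw [hc0, hcy]) hxy.symm
      have hxney : x ≠ y := fun h => by subst h; omega
      refine no2 x y (Walk.cons hxy Walk.nil) (Walk.cons e2 (Walk.cons e1.symm Walk.nil))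
        ?_ ?_ (by simp)
      · simp [Walk.isPath_def, hxney]
      · simp [Walk.isPath_def, hx0, hxney, hy0, Ne.symm hy0]
    · -- c x = 0, c y = 1 : 4-cycle x v1 v0 y
      have hxney : x ≠ y := fun h => by subst h; omega
      have e1 : T.Adj x v1 := by
        rcases lt_trichotomy (σ x) (σ v1) with h | h | h
        · exact (hsc x v1 y h hlty).2 (by rw [hc1, hcy]) hxy.symm
        · exact absurd (hσ h) hx1
        · exact ((hsc v1 x v0 h hltx).2 (by rw [hcx, hc0]) hadj).symm
      have e2 : T.Adj v0 y := by
        rcases lt_trichotomy (σ v0) (σ y) with h | h | h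
        · exact ((hsc x v0 y hltx h).1 (by rw [hcx, hc0]) hxy.symm).symm
        · exact absurd (hσ h) (Ne.symm hy0)
        · exact (hsc v1 y v0 hlty h).1 (by rw [hc1, hcy]) hadj
      refine no2 x y (Walk.cons hxy Walk.nil)
        (Walk.cons e1 (Walk.cons hadj.symm (Walk.cons e2 Walk.nil))) ?_ ?_ (by simp)
      · simp [Walk.isPath_def, hxney]
      · simp [Walk.isPath_def, hx1, hx0, hxney, Ne.symm hne01, Ne.symm hy1, Ne.symm hy0]
    · -- c x = 1, c y = 0 : 4-cycle x v0 v1 y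
      have hxney : x ≠ y := fun h => by subst h; omega
      have e1 : T.Adj x v0 := by
        rcases lt_trichotomy (σ x) (σ v0) with h | h | h
        · exact (hsc x v0 y h hlty).2 (by rw [hc0, hcy]) hxy.symm
        · exact absurd (hσ h) hx0
        · exact ((hsc v0 x v1 h hltx).2 (by rw [hcx, hc1]) hadj.symm).symm
      have e2 : T.Adj v1 y := by
        rcases lt_trichotomy (σ v1) (σ y) with h | h | h
        · exact ((hsc x v1 y hltx h).1 (by rw [hcx, hc1]) hxy.symm).symm
        · exact absurd (hσ h) (Ne.symm hy1)
        · exact (hsc v0 y v1 hlty h).1 (by rw [hc0, hcy]) hadj.symm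
      refine no2 x y (Walk.cons hxy Walk.nil)
        (Walk.cons e1 (Walk.cons hadj (Walk.cons e2 Walk.nil))) ?_ ?_ (by simp)
      · simp [Walk.isPath_def, hxney]
      · simp [Walk.isPath_def, hx0, hx1, hxney, hne01, Ne.symm hy0, Ne.symm hy1]
    · -- c x = 1, c y = 1 : triangle x v1 y
      have e1 : T.Adj y v1 := (hsc x v1 y hltx hlty).1 (by rw [hcx, hc1]) hxy.symm
      have e2 : T.Adj x v1 := (hsc x v1 y hltx hlty).2 (by rw [hc1, hcy]) hxy.symm
      have hxney : x ≠ y := fun h => by subst h; omega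
      refine no2 x y (Walk.cons hxy Walk.nil) (Walk.cons e2 (Walk.cons e1.symm Walk.nil))
        ?_ ?_ (by simp)
      · simp [Walk.isPath_def, hxney]
      · simp [Walk.isPath_def, hx1, hxney, hy1, Ne.symm hy1]
  -- dichotomy: every vertex other than v0, v1 is before or after
  have hdich : ∀ x : V, x ≠ v0 → x ≠ v1 →
      ((c x = 0 ∧ σ x < σ v0) ∨ (c x = 1 ∧ σ x < σ v1)) ∨
      ((c x = 0 ∧ σ v0 < σ x) ∨ (c x = 1 ∧ σ v1 < σ x)) := by
    intro x hx0 hx1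
    have h2 := hc x
    have hne0 : σ x ≠ σ v0 := fun h => hx0 (hσ h)
    have hne1 : σ x ≠ σ v1 := fun h => hx1 (hσ h)
    omega
  -- main induction on the walk
  have main : ∀ (a : V) (q : T.Walk a w),
      ((c a = 0 ∧ σ a < σ v0) ∨ (c a = 1 ∧ σ a < σ v1)) →
      v0 ∉ q.support → v1 ∉ q.support → False := by
    intro a q
    induction q with
    | nil =>
      intro hba _ _
      rcases hba with ⟨h1, h2⟩ | ⟨h1, h2⟩ <;> rcases hafter with ⟨h3, h4⟩ | ⟨h3, h4⟩ <;> omega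
    | @cons a b w' hab q ih =>
      intro hba hs0 hs1
      simp only [Walk.support_cons, List.mem_cons] at hs0 hs1
      push_neg at hs0 hs1
      have hb0 : b ≠ v0 := fun h => hs0.2 (h ▸ q.start_mem_support)
      have hb1 : b ≠ v1 := fun h => hs1.2 (h ▸ q.start_mem_support)
      rcases hdich b hb0 hb1 with hb | hb
      · exact ih hw0 hw1 hafter p hp0 hp1 hb hs0.2 hs1.2
      · exact key a b hab (Ne.symm hs0.1) (Ne.symm hs1.1) hb0 hb1 hba hb
  exact main u p hbefore hp0 hp1
end

section
/- Let T = (V,E) be a tree and let v0, v1, v2, v3 be four distinct vertices of T such that v0 is the nexus between v1, v2 and v3. Then there is no simple path in T containing all three vertices v1, v2 and v3. -/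
open SimpleGraph

/-- `v0` is the nexus between `v1`, `v2` and `v3`: the four vertices are pairwise distinct
and the simple paths from `v0` to `v1`, `v2`, `v3`, with `v0` removed, are pairwise
vertex-disjoint. -/
def Nexus {V : Type*} (T : SimpleGraph V) (v0 v1 v2 v3 : V) : Prop :=
  v0 ≠ v1 ∧ v0 ≠ v2 ∧ v0 ≠ v3 ∧ v1 ≠ v2 ∧ v1 ≠ v3 ∧ v2 ≠ v3 ∧
  ∀ (p1 : T.Walk v0 v1) (p2 : T.Walk v0 v2) (p3 : T.Walk v0 v3),
    p1.IsPath → p2.IsPath → p3.IsPath →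
      (∀ x : V, x ≠ v0 → ¬(x ∈ p1.support ∧ x ∈ p2.support)) ∧
      (∀ x : V, x ≠ v0 → ¬(x ∈ p1.support ∧ x ∈ p3.support)) ∧
      (∀ x : V, x ≠ v0 → ¬(x ∈ p2.support ∧ x ∈ p3.support))


lemma lemB_s10 {V : Type*} [DecidableEq V] {T : SimpleGraph V} {a v0 w : V} {s : T.Walk a v0}
    (hs : s.IsPath) (hw : w ∈ s.support) (hwv : w ≠ v0) :
    v0 ∉ (s.takeUntil w hw).support := by
  intro h0
  have hspec := s.take_spec hw
  have hnd : s.support.Nodup := hs.support_nodup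
  rw [← hspec, Walk.support_append, List.nodup_append] at hnd
  have hv0d : v0 ∈ (s.dropUntil w hw).support := Walk.end_mem_support _
  rw [(s.dropUntil w hw).support_eq_cons] at hv0d
  rw [List.mem_cons] at hv0d
  rcases hv0d with h | h
  · exact hwv h.symm
  · exact hnd.2.2 v0 h0 v0 h rfl

lemma subpathA {V : Type*} [DecidableEq V] {T : SimpleGraph V} {a b u w : V} {p : T.Walk a b}
    (hp : p.IsPath) (hu : u ∈ p.support) (hw : w ∈ p.support) :
    ∃ q : T.Walk u w, q.IsPath ∧ q.support ⊆ p.support := by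
  by_cases hw' : w ∈ (p.dropUntil u hu).support
  · exact ⟨(p.dropUntil u hu).takeUntil w hw', (hp.dropUntil hu).takeUntil hw',
      fun x hx => p.support_dropUntil_subset hu (Walk.support_takeUntil_subset _ hw' hx)⟩
  · have hw'' : w ∈ (p.takeUntil u hu).support := by
      have := p.take_spec hu
      rw [← this, Walk.mem_support_append_iff] at hw
      tauto
    exact ⟨((p.takeUntil u hu).dropUntil w hw'').reverse,
      ((hp.takeUntil hu).dropUntil hw'').reverse,
      fun x hx => by
        rw [Walk.support_reverse, List.mem_reverse] at hx
        exact p.support_takeUntil_subset hu (Walk.support_dropUntil_subset _ hw'' hx)⟩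

lemma subpathB {V : Type*} [DecidableEq V] {T : SimpleGraph V} {a v0 u w : V} {s : T.Walk a v0}
    (hs : s.IsPath) (hu : u ∈ s.support) (hw : w ∈ s.support)
    (hu0 : u ≠ v0) (hw0 : w ≠ v0) :
    ∃ q : T.Walk u w, q.IsPath ∧ v0 ∉ q.support := by
  by_cases hw' : w ∈ (s.dropUntil u hu).support
  · exact ⟨(s.dropUntil u hu).takeUntil w hw', (hs.dropUntil hu).takeUntil hw',
      lemB_s10 (hs.dropUntil hu) hw' hw0⟩
  · have hw'' : w ∈ (s.takeUntil u hu).support := by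
      have := s.take_spec hu
      rw [← this, Walk.mem_support_append_iff] at hw
      tauto
    refine ⟨((s.takeUntil u hu).dropUntil w hw'').reverse,
      ((hs.takeUntil hu).dropUntil hw'').reverse, fun hx => ?_⟩
    rw [Walk.support_reverse, List.mem_reverse] at hx
    exact lemB_s10 hs hu hu0 (Walk.support_dropUntil_subset _ hw'' hx)

lemma appendPath {V : Type*} [DecidableEq V] {T : SimpleGraph V} {v0 v1 v2 : V}
    {q1 : T.Walk v0 v1} {q2 : T.Walk v0 v2} (h1 : q1.IsPath) (h2 : q2.IsPath)
    (disj : ∀ x : V, x ≠ v0 → ¬(x ∈ q1.support ∧ x ∈ q2.support)) :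
    (q1.reverse.append q2).IsPath := by
  rw [Walk.isPath_def, Walk.support_append, List.nodup_append]
  refine ⟨h1.reverse.support_nodup, ?_, ?_⟩
  · have := h2.support_nodup
    rw [q2.support_eq_cons] at this
    exact this.of_cons
  · intro x hx1 y hx2 hxy; subst hxy
    rw [Walk.support_reverse, List.mem_reverse] at hx1
    have hnd := h2.support_nodup
    rw [q2.support_eq_cons] at hnd
    have hx0 : x ≠ v0 := fun h => (List.nodup_cons.1 hnd).1 (h ▸ hx2)
    have : x ∈ q2.support := by rw [q2.support_eq_cons]; exact List.mem_cons_of_mem _ hx2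
    exact disj x hx0 ⟨hx1, this⟩

lemma finalContra {V : Type*} [DecidableEq V] {T : SimpleGraph V} (hT : T.IsTree) {c v0 u w : V}
    {s : T.Walk c v0} (hs : s.IsPath) (hu : u ∈ s.support) (hw : w ∈ s.support)
    (hu0 : u ≠ v0) (hw0 : w ≠ v0) (r : T.Walk u w) (hr : r.IsPath)
    (hr0 : v0 ∈ r.support) : False := by
  obtain ⟨q, hq, hq0⟩ := subpathB hs hu hw hu0 hw0
  obtain ⟨r', hr', hru⟩ := hT.existsUnique_path u w
  have h1 : q = r' := hru q hq
  have h2 : r = r' := hru r hr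
  exact hq0 (h1 ▸ h2 ▸ hr0)

/-- If `v0` is the nexus between `v1`, `v2` and `v3` in a tree, then no simple path
contains all three of `v1`, `v2`, `v3`. -/
theorem nexus_not_on_common_path {V : Type*} [Fintype V]
    (T : SimpleGraph V) (hT : T.IsTree)
    (v0 v1 v2 v3 : V) (hnex : Nexus T v0 v1 v2 v3) :
    ¬ ∃ (a b : V) (p : T.Walk a b), p.IsPath ∧
        v1 ∈ p.support ∧ v2 ∈ p.support ∧ v3 ∈ p.support := by
  classical
  rintro ⟨a, b, p, hp, h1, h2, h3⟩
  obtain ⟨h01, h02, h03, h12, h13, h23, hdisj⟩ := hnex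
  obtain ⟨q1, hq1, -⟩ := hT.existsUnique_path v0 v1
  obtain ⟨q2, hq2, -⟩ := hT.existsUnique_path v0 v2
  obtain ⟨q3, hq3, -⟩ := hT.existsUnique_path v0 v3
  obtain ⟨D12, D13, D23⟩ := hdisj q1 q2 q3 hq1 hq2 hq3
  have r12 := appendPath hq1 hq2 D12
  have r13 := appendPath hq1 hq3 D13
  have r23 := appendPath hq2 hq3 D23
  have hv012 : v0 ∈ (q1.reverse.append q2).support := by
    rw [Walk.mem_support_append_iff]; left; exact Walk.end_mem_support _
  have hv013 : v0 ∈ (q1.reverse.append q3).support := by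
    rw [Walk.mem_support_append_iff]; left; exact Walk.end_mem_support _
  have hv023 : v0 ∈ (q2.reverse.append q3).support := by
    rw [Walk.mem_support_append_iff]; left; exact Walk.end_mem_support _
  have h0 : v0 ∈ p.support := by
    obtain ⟨q, hq, hsub⟩ := subpathA hp h1 h2
    obtain ⟨r', hr', hru⟩ := hT.existsUnique_path v1 v2
    have e1 : q = r' := hru q hq
    have e2 : q1.reverse.append q2 = r' := hru _ r12
    apply hsub
    rw [e1, ← e2]; exact hv012
  set sL := p.takeUntil v0 h0 with hsLdef
  set sR := (p.dropUntil v0 h0).reverse with hsRdef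
  have hsLp : sL.IsPath := hp.takeUntil h0
  have hsRp : sR.IsPath := (hp.dropUntil h0).reverse
  have hmem : ∀ x, x ∈ p.support → x ∈ sL.support ∨ x ∈ sR.support := by
    intro x hx
    rw [← p.take_spec h0, Walk.mem_support_append_iff] at hx
    rcases hx with h | h
    · left; exact h
    · right; rw [hsRdef, Walk.support_reverse, List.mem_reverse]; exact h
  have m1 := hmem v1 h1; have m2 := hmem v2 h2; have m3 := hmem v3 h3
  rcases m1 with m1 | m1 <;> rcases m2 with m2 | m2 <;> rcases m3 with m3 | m3
  · exact finalContra hT hsLp m1 m2 h01.symm h02.symm _ r12 hv012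
  · exact finalContra hT hsLp m1 m2 h01.symm h02.symm _ r12 hv012
  · exact finalContra hT hsLp m1 m3 h01.symm h03.symm _ r13 hv013
  · exact finalContra hT hsRp m2 m3 h02.symm h03.symm _ r23 hv023
  · exact finalContra hT hsLp m2 m3 h02.symm h03.symm _ r23 hv023
  · exact finalContra hT hsRp m1 m3 h01.symm h03.symm _ r13 hv013
  · exact finalContra hT hsRp m1 m2 h01.symm h02.symm _ r12 hv012
  · exact finalContra hT hsRp m1 m2 h01.symm h02.symm _ r12 hv012
end

section
/- Let T = (V,E) be a tree, let σ be a linear ordering of V and let S = {V^0, V^1} be a partition of V into two classes such that σ and S are strongly consistent. Let v1, v2, v3 be vertices with v1 < v2 < v3 in σ and suppose d(v2) = 3. Then there do not exist a vertex w, distinct from v1 and v3, adjacent to v2, and a vertex u, distinct from v1, v2 and v3, adjacent to w, such that the unique simple path from v2 to v1 passes through u and the unique simple path from v2 to v3 passes through u. -/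
open SimpleGraph

private lemma path_unique {V : Type*} {T : SimpleGraph V} (hT : T.IsTree) {x y : V}
    {p q : T.Walk x y} (hp : p.IsPath) (hq : q.IsPath) : p = q :=
  ((hT.existsUnique_path x y).unique hp hq)

private lemma no_triangle_s14 {V : Type*} {T : SimpleGraph V} (hT : T.IsTree) {x y z : V}
    (hxy : T.Adj x y) (hyz : T.Adj y z) (hxz : T.Adj x z) : False := by
  have hp : (SimpleGraph.Walk.cons hxz SimpleGraph.Walk.nil : T.Walk x z).IsPath := by
    simp [SimpleGraph.Walk.isPath_def, hxz.ne]
  have hq : (SimpleGraph.Walk.cons hxy (SimpleGraph.Walk.cons hyz SimpleGraph.Walk.nil) :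
      T.Walk x z).IsPath := by
    simp [SimpleGraph.Walk.isPath_def, hxy.ne, hyz.ne, hxz.ne]
  have h := path_unique hT hp hq
  simpa using congrArg SimpleGraph.Walk.length h

private lemma exists_cross {V : Type*} {G : SimpleGraph V} (f : V → ℕ) (K : ℕ) :
    ∀ {a b : V} (p : G.Walk a b), (∀ z ∈ p.support, f z ≠ K) → f a < K → K < f b →
      ∃ x y, G.Adj x y ∧ x ∈ p.support ∧ y ∈ p.support ∧ f x < K ∧ K < f y := by
  intro a b p
  induction p with
  | nil => intro _ ha hb; omega
  | @cons a d b h q ih =>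
      intro hK ha hb
      rcases lt_or_gt_of_ne (hK d (by simp)) with hd | hd
      · obtain ⟨x, y, hxy, hx, hy, h1, h2⟩ := ih (fun z hz => hK z (by simp [hz])) hd hb
        exact ⟨x, y, hxy, by simp [hx], by simp [hy], h1, h2⟩
      · exact ⟨a, d, h, by simp, by simp, ha, hd⟩

private lemma gate_no_adj {V : Type*} {T : SimpleGraph V} [DecidableEq V] (hT : T.IsTree)
    {v2 w u t : V} (hv2w : T.Adj v2 w) (hwu : T.Adj w u) (huv2 : u ≠ v2)
    (P : T.Walk v2 t) (hP : P.IsPath) (hu : u ∈ P.support) :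
    (∀ z ∈ (P.dropUntil u hu).support, z ≠ v2 ∧ ¬ T.Adj v2 z) := by
  have hpw : (SimpleGraph.Walk.cons hv2w (SimpleGraph.Walk.cons hwu SimpleGraph.Walk.nil) :
      T.Walk v2 u).IsPath := by
    simp [SimpleGraph.Walk.isPath_def, hv2w.ne, hwu.ne, Ne.symm huv2]
  have htk : P.takeUntil u hu =
      SimpleGraph.Walk.cons hv2w (SimpleGraph.Walk.cons hwu SimpleGraph.Walk.nil) :=
    path_unique hT (hP.takeUntil hu) hpw
  have hsp : P.support = v2 :: w :: u :: (P.dropUntil u hu).support.tail := by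
    conv_lhs => rw [← SimpleGraph.Walk.take_spec P hu]
    rw [SimpleGraph.Walk.support_append, htk]
    simp
  have hnodup := hP.support_nodup
  rw [hsp] at hnodup
  simp only [List.nodup_cons, List.mem_cons] at hnodup
  have hsupR : (P.dropUntil u hu).support = u :: (P.dropUntil u hu).support.tail :=
    SimpleGraph.Walk.support_eq_cons _
  have hv2R : v2 ∉ (P.dropUntil u hu).support := by
    rw [hsupR]
    simp only [List.mem_cons]
    push_neg
    exact ⟨fun h => huv2 h.symm, fun h => hnodup.1 (Or.inr (Or.inr h))⟩
  have hwR : w ∉ (P.dropUntil u hu).support := by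
    rw [hsupR]
    simp only [List.mem_cons]
    push_neg
    exact ⟨hwu.ne, fun h => hnodup.2.1 (Or.inr h)⟩
  intro z hz
  refine ⟨fun h => hv2R (h ▸ hz), fun hadj => ?_⟩
  have hzw : z ≠ w := fun h => hwR (h ▸ hz)
  have hzP : z ∈ P.support := SimpleGraph.Walk.support_dropUntil_subset _ hu hz
  have hez : (SimpleGraph.Walk.cons hadj SimpleGraph.Walk.nil : T.Walk v2 z).IsPath := by
    simp [SimpleGraph.Walk.isPath_def, hadj.ne]
  have heq := path_unique hT (hP.takeUntil hzP) hez
  have hsp' : P.support = v2 :: z :: (P.dropUntil z hzP).support.tail := by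
    conv_lhs => rw [← SimpleGraph.Walk.take_spec P hzP]
    rw [SimpleGraph.Walk.support_append, heq]
    simp
  rw [hsp] at hsp'
  simp only [List.cons.injEq] at hsp'
  exact hzw hsp'.2.1.symm

/-- In a tree with a strongly consistent ordering and two-class partition, if
`v1 < v2 < v3` and `d(v2) = 3`, then there cannot exist a neighbor `w` of `v2`
(distinct from `v1`, `v3`) and a neighbor `u` of `w` (distinct from `v1`, `v2`, `v3`)
lying on both the unique simple path from `v2` to `v1` and the unique simple path from
`v2` to `v3`. -/
theorem degree_three_no_common_gate {V : Type*} [Fintype V]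
    (T : SimpleGraph V) (hT : T.IsTree)
    (σ : V → ℕ) (hσ : Function.Injective σ) (c : V → ℕ) (hc : ∀ v, c v < 2)
    (hsc : StronglyConsistent T σ c)
    (v1 v2 v3 : V) (h12 : σ v1 < σ v2) (h23 : σ v2 < σ v3)
    (hd : deg T v2 = 3) :
    ¬ ∃ w u : V, w ≠ v1 ∧ w ≠ v3 ∧ T.Adj v2 w ∧
        u ≠ v1 ∧ u ≠ v2 ∧ u ≠ v3 ∧ T.Adj w u ∧
        (∀ p : T.Walk v2 v1, p.IsPath → u ∈ p.support) ∧
        (∀ p : T.Walk v2 v3, p.IsPath → u ∈ p.support) := by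
  haveI : DecidableEq V := Classical.decEq V
  rintro ⟨w, u, hwv1, hwv3, hv2w, huv1, huv2, huv3, hwu, hg1, hg3⟩
  obtain ⟨P1, hP1, -⟩ := hT.existsUnique_path v2 v1
  obtain ⟨P3, hP3, -⟩ := hT.existsUnique_path v2 v3
  have hu1 : u ∈ P1.support := hg1 P1 hP1
  have hu3 : u ∈ P3.support := hg3 P3 hP3
  have hR1 := gate_no_adj hT hv2w hwu huv2 P1 hP1 hu1
  have hR3 := gate_no_adj hT hv2w hwu huv2 P3 hP3 hu3
  set R1 := P1.dropUntil u hu1 with hR1def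
  set R3 := P3.dropUntil u hu3 with hR3def
  -- the walk from v1 to v3 avoiding v2 and its neighbors
  let W : T.Walk v1 v3 := R1.reverse.append R3
  have hWmem : ∀ z ∈ W.support, z ≠ v2 ∧ ¬ T.Adj v2 z := by
    intro z hz
    rw [SimpleGraph.Walk.mem_support_append_iff] at hz
    rcases hz with hz | hz
    · rw [SimpleGraph.Walk.support_reverse, List.mem_reverse] at hz
      exact hR1 z hz
    · exact hR3 z hz
  have hWK : ∀ z ∈ W.support, σ z ≠ σ v2 := fun z hz h => (hWmem z hz).1 (hσ h)
  obtain ⟨x, y, hxy, hx, hy, hxlt, hylt⟩ := exists_cross σ (σ v2) W hWK h12 h23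
  have hnx : ¬ T.Adj v2 x := (hWmem x hx).2
  have hny : ¬ T.Adj v2 y := (hWmem y hy).2
  -- colors of the crossing edge endpoints differ from that of v2
  have hcx : c x ≠ c v2 := fun h => hny (((hsc x v2 y hxlt hylt).1 h hxy.symm).symm)
  have hcy : c y ≠ c v2 := fun h => hnx ((hsc x v2 y hxlt hylt).2 h.symm hxy.symm).symm
  have hcxy : c x = c y := by have := hc x; have := hc y; have := hc v2; omega
  -- every neighbor of v2 has the same color as v2
  have hnbr : ∀ n, T.Adj v2 n → c n = c v2 := by
    intro n hn
    have hnxne : σ n ≠ σ x := fun h => hnx ((hσ h) ▸ hn)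
    have hnyne : σ n ≠ σ y := fun h => hny ((hσ h) ▸ hn)
    have hnv2 : σ n ≠ σ v2 := fun h => hn.ne' (hσ h)
    rcases lt_or_gt_of_ne hnxne with h1 | h1
    · -- σ n < σ x < σ v2
      have hstep := (hsc n x v2 h1 hxlt).1
      have : c n ≠ c x := fun hcnx => hnx (hstep hcnx hn)
      have := hc n; have := hc x; have := hc v2; omega
    · have hmid : σ x < σ n → σ n < σ y → c n = c v2 := by
        intro ha hb
        have : c n ≠ c x := by
          intro hcnx
          have hAyn : T.Adj y n := (hsc x n y ha hb).1 hcnx.symm hxy.symm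
          have hAxn : T.Adj x n := (hsc x n y ha hb).2 (hcnx.trans hcxy) hxy.symm
          exact no_triangle_s14 hT hxy hAyn hAxn
        have := hc n; have := hc x; have := hc v2; omega
      rcases lt_or_gt_of_ne hnv2 with h2 | h2
      · exact hmid h1 (h2.trans hylt)
      · rcases lt_or_gt_of_ne hnyne with h3 | h3
        · exact hmid (hxlt.trans h2) h3
        · -- σ y < σ n
          have : c n ≠ c y := fun hcny =>
            hny ((hsc v2 y n hylt h3).2 hcny.symm hn.symm)
          have := hc n; have := hc y; have := hc v2; omega
  -- pigeonhole on the three neighbors of v2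
  have side' : ∀ n1 n2 : V, T.Adj v2 n1 → T.Adj v2 n2 → σ n1 < σ n2 →
      (σ n2 < σ v2 ∨ σ v2 < σ n1) → False := by
    intro n1 n2 ha1 ha2 hlt hcase
    rcases hcase with hcase | hcase
    · have hAdj : T.Adj n1 n2 := (hsc n1 n2 v2 hlt hcase).2 (hnbr n2 ha2) ha1
      exact no_triangle_s14 hT hAdj ha2.symm ha1.symm
    · have hAdj : T.Adj n2 n1 := (hsc v2 n1 n2 hcase hlt).1 (hnbr n1 ha1).symm ha2.symm
      exact no_triangle_s14 hT ha1 hAdj.symm ha2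
  have sideL : ∀ n1 n2 : V, T.Adj v2 n1 → T.Adj v2 n2 → n1 ≠ n2 →
      σ n1 < σ v2 → σ n2 < σ v2 → False := by
    intro n1 n2 a1 a2 hne hl1 hl2
    rcases lt_or_gt_of_ne (fun h : σ n1 = σ n2 => hne (hσ h)) with h | h
    · exact side' n1 n2 a1 a2 h (Or.inl hl2)
    · exact side' n2 n1 a2 a1 h (Or.inl hl1)
  have sideR : ∀ n1 n2 : V, T.Adj v2 n1 → T.Adj v2 n2 → n1 ≠ n2 →
      σ v2 < σ n1 → σ v2 < σ n2 → False := by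
    intro n1 n2 a1 a2 hne hl1 hl2
    rcases lt_or_gt_of_ne (fun h : σ n1 = σ n2 => hne (hσ h)) with h | h
    · exact side' n1 n2 a1 a2 h (Or.inr hl1)
    · exact side' n2 n1 a2 a1 h (Or.inr hl2)
  rw [deg] at hd
  obtain ⟨p, q, r, hpq, hpr, hqr, hset⟩ := Set.ncard_eq_three.mp hd
  have hadjp : T.Adj v2 p := by
    have : p ∈ T.neighborSet v2 := by rw [hset]; simp
    exact this
  have hadjq : T.Adj v2 q := by
    have : q ∈ T.neighborSet v2 := by rw [hset]; simp
    exact this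
  have hadjr : T.Adj v2 r := by
    have : r ∈ T.neighborSet v2 := by rw [hset]; simp
    exact this
  have hσp : σ p ≠ σ v2 := fun h => hadjp.ne' (hσ h)
  have hσq : σ q ≠ σ v2 := fun h => hadjq.ne' (hσ h)
  have hσr : σ r ≠ σ v2 := fun h => hadjr.ne' (hσ h)
  rcases lt_or_gt_of_ne hσp with h1 | h1 <;>
    rcases lt_or_gt_of_ne hσq with h2 | h2 <;>
    rcases lt_or_gt_of_ne hσr with h3 | h3
  · exact sideL p q hadjp hadjq hpq h1 h2
  · exact sideL p q hadjp hadjq hpq h1 h2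
  · exact sideL p r hadjp hadjr hpr h1 h3
  · exact sideR q r hadjq hadjr hqr h2 h3
  · exact sideL q r hadjq hadjr hqr h2 h3
  · exact sideR p r hadjp hadjr hpr h1 h3
  · exact sideR p q hadjp hadjq hpq h1 h2
  · exact sideR p q hadjp hadjq hpq h1 h2
end

section
/- Let T = (V,E) be a tree, let σ be a linear ordering of V and let S = {V^0, V^1} be a partition of V into two classes such that σ and S are strongly consistent. Let v1, v2, v3 be vertices with v1 < v2 < v3 in σ and suppose d(v2) = 3. Then either the unique simple path in T from v1 to v3 passes through v2, or some vertex on the unique simple path from v1 to v3 is adjacent to v2. -/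
open SimpleGraph

/-- An acyclic graph has no triangles. -/
lemma noTriangle {V : Type*} {T : SimpleGraph V} (hT : T.IsAcyclic)
    {a b c : V} (hab : T.Adj a b) (hbc : T.Adj b c) (hac : T.Adj a c) : False := by
  have h1 : (Walk.cons hac Walk.nil).IsPath := by
    simp [Walk.isPath_def, hac.ne]
  have h2 : (Walk.cons hab (Walk.cons hbc Walk.nil)).IsPath := by
    simp [Walk.isPath_def, hab.ne, hbc.ne, hac.ne]
  have := congrArg (fun q : T.Path a c => q.1.length)
    (hT.path_unique ⟨_, h1⟩ ⟨_, h2⟩)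
  simp at this

/-- Along a walk from a vertex satisfying `P` to one not satisfying `P`, there is an edge
crossing out of `P`. -/
lemma crossEdge {V : Type*} {G : SimpleGraph V} (P : V → Prop) :
    ∀ {a b : V} (p : G.Walk a b), P a → ¬ P b →
      ∃ x ∈ p.support, ∃ y ∈ p.support, G.Adj x y ∧ P x ∧ ¬ P y := by
  intro a b p
  induction p with
  | nil => intro ha hb; exact absurd ha hb
  | @cons a d b h q ih =>
    intro ha hb
    by_cases hd : P d
    · obtain ⟨x, hx, y, hy, hxy⟩ := ih hd hb
      exact ⟨x, by simp [hx], y, by simp [hy], hxy⟩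
    · exact ⟨a, by simp, d, by simp, h, ha, hd⟩

/-- In a tree with a strongly consistent ordering and two-class partition, if
`v1 < v2 < v3` and `d(v2) = 3`, then either the unique simple path from `v1` to `v3`
passes through `v2`, or some vertex on that path is adjacent to `v2`. -/
theorem degree_three_on_or_adjacent_to_path {V : Type*} [Fintype V]
    (T : SimpleGraph V) (hT : T.IsTree)
    (σ : V → ℕ) (hσ : Function.Injective σ) (c : V → ℕ) (hc : ∀ v, c v < 2)
    (hsc : StronglyConsistent T σ c)
    (v1 v2 v3 : V) (h12 : σ v1 < σ v2) (h23 : σ v2 < σ v3)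
    (hd : deg T v2 = 3) :
    (∀ p : T.Walk v1 v3, p.IsPath → v2 ∈ p.support) ∨
    (∀ p : T.Walk v1 v3, p.IsPath → ∃ x ∈ p.support, T.Adj x v2) := by
  classical
  have tri := fun {a b c : V} => noTriangle hT.2 (a := a) (b := b) (c := c)
  obtain ⟨p0, hp0, hup⟩ := hT.existsUnique_path v1 v3
  by_cases hmem : v2 ∈ p0.support
  · left; intro p hp; rw [hup p hp]; exact hmem
  · right; intro p hp; rw [hup p hp]
    have hns : ∀ x ∈ p0.support, σ x ≠ σ v2 := by
      intro x hx h
      exact hmem (hσ h ▸ hx)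
    obtain ⟨x, hx, y, hy, hxy, hPx, hPy⟩ :=
      crossEdge (fun v => σ v < σ v2) p0 h12 (not_lt.2 h23.le)
    have hw : σ v2 < σ y := lt_of_le_of_ne (not_lt.1 hPy) (hns y hy).symm
    by_cases hcu : c x = c v2
    · exact ⟨y, hy, (hsc x v2 y hPx hw).1 hcu hxy.symm⟩
    by_cases hcw : c v2 = c y
    · exact ⟨x, hx, (hsc x v2 y hPx hw).2 hcw hxy.symm⟩
    have hcuw : c x = c y := by
      have := hc x; have := hc y; have := hc v2; omega
    -- left-pair helper
    have L : ∀ n m, T.Adj v2 n → T.Adj v2 m → σ n < σ m → σ m < σ v2 →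
        ∃ z ∈ p0.support, T.Adj z v2 := by
      intro n m hn hm hnm hm2
      have hcm : c m ≠ c v2 := fun h =>
        tri ((hsc n m v2 hnm hm2).2 h hn) hm.symm hn.symm
      have hcm' : c m = c x := by
        have := hc m; have := hc x; have := hc v2; omega
      rcases lt_trichotomy (σ m) (σ x) with h | h | h
      · exact ⟨x, hx, ((hsc m x v2 h hPx).1 hcm' hm).symm⟩
      · exact ⟨x, hx, by rw [← hσ h]; exact hm.symm⟩
      · have h1 := (hsc x m y h (hm2.trans hw)).1 hcm'.symm hxy.symm
        have h2 := (hsc x m y h (hm2.trans hw)).2 (hcm'.trans hcuw) hxy.symm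
        exact (tri h2 h1.symm hxy).elim
    -- right-pair helper
    have R : ∀ n m, T.Adj v2 n → T.Adj v2 m → σ v2 < σ n → σ n < σ m →
        ∃ z ∈ p0.support, T.Adj z v2 := by
      intro n m hn hm h2n hnm
      have hcn : c n ≠ c v2 := fun h =>
        tri hn ((hsc v2 n m h2n hnm).1 h.symm hm.symm).symm hm
      have hcn' : c n = c y := by
        have := hc n; have := hc y; have := hc v2; omega
      rcases lt_trichotomy (σ y) (σ n) with h | h | h
      · exact ⟨y, hy, ((hsc v2 y n hw h).2 hcn'.symm hn.symm).symm⟩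
      · exact ⟨y, hy, by rw [hσ h]; exact hn.symm⟩
      · have h1 := (hsc x n y (hPx.trans h2n) h).1 (hcuw.trans hcn'.symm) hxy.symm
        have h2 := (hsc x n y (hPx.trans h2n) h).2 hcn' hxy.symm
        exact (tri h2 h1.symm hxy).elim
    have pair : ∀ n m, n ≠ m → T.Adj v2 n → T.Adj v2 m →
        ((σ n < σ v2 ∧ σ m < σ v2) ∨ (σ v2 < σ n ∧ σ v2 < σ m)) →
        ∃ z ∈ p0.support, T.Adj z v2 := by
      intro n m hne hn hm hside
      rcases lt_trichotomy (σ n) (σ m) with h | h | h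
      · rcases hside with ⟨_, h2⟩ | ⟨h1, _⟩
        · exact L n m hn hm h h2
        · exact R n m hn hm h1 h
      · exact absurd (hσ h) hne
      · rcases hside with ⟨h2, _⟩ | ⟨_, h1⟩
        · exact L m n hm hn h h2
        · exact R m n hm hn h1 h
    rw [deg] at hd
    obtain ⟨a, b, d, hab, had, hbd, hset⟩ := Set.ncard_eq_three.mp hd
    have hA : T.Adj v2 a := by
      have : a ∈ T.neighborSet v2 := hset ▸ (by simp : a ∈ ({a, b, d} : Set V))
      exact this
    have hB : T.Adj v2 b := by
      have : b ∈ T.neighborSet v2 := hset ▸ (by simp : b ∈ ({a, b, d} : Set V))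
      exact this
    have hD : T.Adj v2 d := by
      have : d ∈ T.neighborSet v2 := hset ▸ (by simp : d ∈ ({a, b, d} : Set V))
      exact this
    have side : ∀ n, T.Adj v2 n → σ n < σ v2 ∨ σ v2 < σ n := by
      intro n hn
      exact lt_or_gt_of_ne (fun h => hn.ne' (hσ h))
    rcases side a hA with ha | ha <;> rcases side b hB with hb | hb <;>
      rcases side d hD with hd' | hd' <;>
      first
        | exact pair a b hab hA hB (Or.inl ⟨ha, hb⟩)
        | exact pair a b hab hA hB (Or.inr ⟨ha, hb⟩)
        | exact pair a d had hA hD (Or.inl ⟨ha, hd'⟩)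
        | exact pair a d had hA hD (Or.inr ⟨ha, hd'⟩)
        | exact pair b d hbd hB hD (Or.inl ⟨hb, hd'⟩)
        | exact pair b d hbd hB hD (Or.inr ⟨hb, hd'⟩)
end

section
/- Let T = (V,E) be a tree, let σ be a linear ordering of V and let S = {V^0, V^1} be a partition of V into two classes such that σ and S are strongly consistent. Let v1, v2, v3 be vertices with v1 < v2 < v3 in σ such that d(v2) = 3 and there exists a vertex v0 that is the nexus between v1, v2 and v3. Then v0 is adjacent to v2. -/
open SimpleGraph

/-- A tree (acyclic graph) has no triangles. -/
lemma tree_no_triangle {V : Type*} {T : SimpleGraph V} (hac : T.IsAcyclic)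
    {p q r : V} (h1 : T.Adj p q) (h2 : T.Adj p r) (h3 : T.Adj q r) : False := by
  have hP1 : (Walk.cons h3 Walk.nil : T.Walk q r).IsPath := by
    simp [Walk.isPath_def, h3.ne]
  have hP2 : (Walk.cons h1.symm (Walk.cons h2 Walk.nil) : T.Walk q r).IsPath := by
    simp [Walk.isPath_def, h1.ne, h2.ne, h3.ne, h1.ne']
  have heq := hac.path_unique ⟨_, hP1⟩ ⟨_, hP2⟩
  have := congrArg (fun pa : T.Path q r => pa.1.length) heq
  simp [Walk.length_cons] at this

/-- crossing edge in a walk -/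
lemma crossing_edge {V : Type*} {G : SimpleGraph V} (σ : V → ℕ) (m : ℕ) :
    ∀ {u w : V} (p : G.Walk u w), (∀ z ∈ p.support, σ z ≠ m) → σ u < m → m < σ w →
    ∃ x y, G.Adj x y ∧ x ∈ p.support ∧ y ∈ p.support ∧ σ x < m ∧ m < σ y := by
  intro u w p
  induction p with
  | nil => intro _ h1 h2; omega
  | @cons u v w h p ih =>
    intro hne h1 h2
    rcases lt_or_gt_of_ne (hne v (by simp)) with hv | hv
    · obtain ⟨x, y, hxy, hx, hy, hx', hy'⟩ :=
        ih (fun z hz => hne z (by simp [hz])) hv h2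
      exact ⟨x, y, hxy, by simp [hx], by simp [hy], hx', hy'⟩
    · exact ⟨u, v, h, by simp, by simp, h1, hv⟩

/-- In a tree, if `P` is a path from `v0` to `vi` disjoint from the (unique) path `P2`
from `v0` to `v2` except at `v0`, and `v0` is not adjacent to `v2`, then no vertex of `P`
is adjacent to `v2`. -/
lemma not_adj_support {V : Type*} [DecidableEq V] {T : SimpleGraph V} (hac : T.IsAcyclic)
    {v0 v2 vi : V} (h02 : ¬T.Adj v0 v2)
    {P : T.Walk v0 vi} {P2 : T.Walk v0 v2} (hP : P.IsPath) (hP2 : P2.IsPath)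
    (hv2 : v2 ∉ P.support)
    (hdisj : ∀ x, x ≠ v0 → ¬(x ∈ P.support ∧ x ∈ P2.support)) :
    ∀ q ∈ P.support, ¬ T.Adj v2 q := by
  intro q hq hadj
  by_cases hq0 : q = v0
  · exact h02 (by rw [hq0] at hadj; exact hadj.symm)
  · have hWpath : ((P.takeUntil q hq).concat hadj.symm).IsPath := by
      rw [Walk.isPath_def, Walk.support_concat]
      have hnv2 : v2 ∉ (P.takeUntil q hq).support :=
        fun h => hv2 (P.support_takeUntil_subset hq h)
      simp [List.nodup_append, (hP.takeUntil hq).support_nodup, hnv2]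
      exact fun a ha h => hnv2 (h ▸ ha)
    have heq := hac.path_unique ⟨_, hWpath⟩ ⟨P2, hP2⟩
    have hmem : q ∈ ((P.takeUntil q hq).concat hadj.symm).support := by
      rw [Walk.support_concat]
      exact List.mem_append_left _ (Walk.end_mem_support _)
    have hq2 : q ∈ P2.support := by
      have h2 := congrArg (fun pa : T.Path v0 v2 => pa.1.support) heq
      simp only at h2
      rw [← h2]
      exact hmem
    exact hdisj q hq0 ⟨hq, hq2⟩

/-- In a tree with a strongly consistent ordering and two-class partition, if
`v1 < v2 < v3`, `d(v2) = 3` and `v0` is the nexus between `v1`, `v2`, `v3`, then `v0`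
is adjacent to `v2`. -/
theorem degree_three_nexus_adjacent {V : Type*} [Fintype V]
    (T : SimpleGraph V) (hT : T.IsTree)
    (σ : V → ℕ) (hσ : Function.Injective σ) (c : V → ℕ) (hc : ∀ v, c v < 2)
    (hsc : StronglyConsistent T σ c)
    (v1 v2 v3 : V) (h12 : σ v1 < σ v2) (h23 : σ v2 < σ v3)
    (hd : deg T v2 = 3)
    (v0 : V) (hnex : Nexus T v0 v1 v2 v3) :
    T.Adj v0 v2 := by
  classical
  by_contra h02
  obtain ⟨h01, h02', h03, hne12, hne13, hne23, hdisj⟩ := hnex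
  obtain ⟨w1⟩ := hT.isConnected.preconnected v0 v1
  obtain ⟨w2⟩ := hT.isConnected.preconnected v0 v2
  obtain ⟨w3⟩ := hT.isConnected.preconnected v0 v3
  obtain ⟨p1, hp1p⟩ := w1.toPath
  obtain ⟨p2, hp2p⟩ := w2.toPath
  obtain ⟨p3, hp3p⟩ := w3.toPath
  obtain ⟨D12, D13, D23⟩ := hdisj p1 p2 p3 hp1p hp2p hp3p
  have hv2p1 : v2 ∉ p1.support := fun h => D12 v2 (Ne.symm h02') ⟨h, p2.end_mem_support⟩
  have hv2p3 : v2 ∉ p3.support := fun h => D23 v2 (Ne.symm h02') ⟨p2.end_mem_support, h⟩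
  have Hadj1 : ∀ q ∈ p1.support, ¬T.Adj v2 q :=
    not_adj_support hT.2 h02 hp1p hp2p hv2p1 (fun x hx hm => D12 x hx hm)
  have Hadj3 : ∀ q ∈ p3.support, ¬T.Adj v2 q :=
    not_adj_support hT.2 h02 hp3p hp2p hv2p3
      (fun x hx hm => D23 x hx ⟨hm.2, hm.1⟩)
  set Q : T.Walk v1 v3 := p1.reverse.append p3 with hQdef
  have hQmem : ∀ z ∈ Q.support, z ∈ p1.support ∨ z ∈ p3.support := by
    intro z hz
    rw [hQdef, Walk.mem_support_append_iff] at hz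
    rcases hz with h | h
    · left; rw [Walk.support_reverse] at h; exact List.mem_reverse.mp h
    · right; exact h
  have Hv2Q : ∀ q ∈ Q.support, ¬T.Adj v2 q := fun q hq =>
    (hQmem q hq).elim (Hadj1 q) (Hadj3 q)
  have hv2Q : v2 ∉ Q.support := fun h => (hQmem v2 h).elim hv2p1 hv2p3
  obtain ⟨x, y, hxy, hxQ, hyQ, hxlt, hylt⟩ :=
    crossing_edge σ (σ v2) Q (fun z hz he => hv2Q (hσ he ▸ hz)) h12 h23
  -- colors of the crossing edge differ from c v2
  have hcx : c x ≠ c v2 := fun h => Hv2Q y hyQ (((hsc x v2 y hxlt hylt).1 h hxy.symm).symm)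
  have hcy : c y ≠ c v2 := fun h => Hv2Q x hxQ ((hsc x v2 y hxlt hylt).2 h.symm hxy.symm).symm
  -- any neighbor of v2 whose color differs from v2's gives a contradiction
  have key_red : ∀ n, T.Adj v2 n → c n ≠ c v2 → False := by
    intro n hn hcn
    have hnne : σ n ≠ σ v2 := fun h => hn.ne' (hσ h)
    rcases lt_or_gt_of_ne hnne with hb | ha
    · -- n below v2
      have hnx : n ≠ x := fun h => Hv2Q x hxQ (h ▸ hn)
      rcases lt_or_gt_of_ne (fun h => hnx (hσ h)) with h | h
      · -- σ n < σ x < σ v2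
        have hceq : c n = c x := by have := hc x; have := hc n; have := hc v2; omega
        exact Hv2Q x hxQ ((hsc n x v2 h hxlt).1 hceq hn)
      · -- σ x < σ n < σ v2 < σ y
        have hA : T.Adj y n :=
          (hsc x n y h (lt_trans hb hylt)).1
            (by have := hc x; have := hc n; have := hc v2; omega) hxy.symm
        have hB : T.Adj x n :=
          (hsc x n y h (lt_trans hb hylt)).2
            (by have := hc y; have := hc n; have := hc v2; omega) hxy.symm
        exact tree_no_triangle hT.2 hxy hB hA
    · -- n above v2
      have hny : n ≠ y := fun h => Hv2Q y hyQ (h ▸ hn)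
      rcases lt_or_gt_of_ne (fun h => hny (hσ h)) with h | h
      · -- σ x < σ v2 < σ n < σ y
        have hA : T.Adj y n :=
          (hsc x n y (lt_trans hxlt ha) h).1
            (by have := hc x; have := hc n; have := hc v2; omega) hxy.symm
        have hB : T.Adj x n :=
          (hsc x n y (lt_trans hxlt ha) h).2
            (by have := hc y; have := hc n; have := hc v2; omega) hxy.symm
        exact tree_no_triangle hT.2 hxy hB hA
      · -- σ v2 < σ y < σ n
        have hceq : c y = c n := by have := hc y; have := hc n; have := hc v2; omega
        exact Hv2Q y hyQ ((hsc v2 y n hylt h).2 hceq hn.symm)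
  -- two neighbors on the same side of v2 give a contradiction
  have same_below : ∀ n1 n2, T.Adj v2 n1 → T.Adj v2 n2 → σ n1 < σ n2 → σ n2 < σ v2 → False := by
    intro n1 n2 hn1 hn2 hlt hlt2
    exact key_red n2 hn2 (fun h =>
      tree_no_triangle hT.2 hn1 hn2 ((hsc n1 n2 v2 hlt hlt2).2 h hn1))
  have same_above : ∀ n1 n2, T.Adj v2 n1 → T.Adj v2 n2 → σ v2 < σ n2 → σ n2 < σ n1 → False := by
    intro n1 n2 hn1 hn2 hlt hlt2
    exact key_red n2 hn2 (fun h =>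
      tree_no_triangle hT.2 hn1 hn2 ((hsc v2 n2 n1 hlt hlt2).1 h.symm hn1.symm))
  have pair : ∀ n1 n2, T.Adj v2 n1 → T.Adj v2 n2 → n1 ≠ n2 →
      ((σ n1 < σ v2 ∧ σ n2 < σ v2) ∨ (σ v2 < σ n1 ∧ σ v2 < σ n2)) → False := by
    intro n1 n2 h1 h2 hne hside
    have hσne : σ n1 ≠ σ n2 := fun h => hne (hσ h)
    rcases hside with ⟨ha, hb⟩ | ⟨ha, hb⟩
    · rcases lt_or_gt_of_ne hσne with h | h
      · exact same_below n1 n2 h1 h2 h hb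
      · exact same_below n2 n1 h2 h1 h ha
    · rcases lt_or_gt_of_ne hσne with h | h
      · exact same_above n2 n1 h2 h1 ha h
      · exact same_above n1 n2 h1 h2 hb h
  -- v2 has three distinct neighbors; two are on the same side
  obtain ⟨m1, m2, m3, hm12, hm13, hm23, hset⟩ := Set.ncard_eq_three.mp hd
  have hadj : ∀ m ∈ ({m1, m2, m3} : Set V), T.Adj v2 m := by
    rw [← hset]; intro m hm; exact hm
  have ha1 : T.Adj v2 m1 := hadj m1 (by simp)
  have ha2 : T.Adj v2 m2 := hadj m2 (by simp)
  have ha3 : T.Adj v2 m3 := hadj m3 (by simp)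
  have hs1 : σ m1 < σ v2 ∨ σ v2 < σ m1 := lt_or_gt_of_ne (fun h => ha1.ne' (hσ h))
  have hs2 : σ m2 < σ v2 ∨ σ v2 < σ m2 := lt_or_gt_of_ne (fun h => ha2.ne' (hσ h))
  have hs3 : σ m3 < σ v2 ∨ σ v2 < σ m3 := lt_or_gt_of_ne (fun h => ha3.ne' (hσ h))
  rcases hs1 with h1 | h1 <;> rcases hs2 with h2 | h2 <;> rcases hs3 with h3 | h3
  · exact pair m1 m2 ha1 ha2 hm12 (Or.inl ⟨h1, h2⟩)
  · exact pair m1 m2 ha1 ha2 hm12 (Or.inl ⟨h1, h2⟩)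
  · exact pair m1 m3 ha1 ha3 hm13 (Or.inl ⟨h1, h3⟩)
  · exact pair m2 m3 ha2 ha3 hm23 (Or.inr ⟨h2, h3⟩)
  · exact pair m2 m3 ha2 ha3 hm23 (Or.inl ⟨h2, h3⟩)
  · exact pair m1 m3 ha1 ha3 hm13 (Or.inr ⟨h1, h3⟩)
  · exact pair m1 m2 ha1 ha2 hm12 (Or.inr ⟨h1, h2⟩)
  · exact pair m1 m2 ha1 ha2 hm12 (Or.inr ⟨h1, h2⟩)
end

section
/- Let T = (V,E) be a tree, let σ be a linear ordering of V and let S = {V^0, V^1} be a partition of V into two classes such that σ and S are strongly consistent. Let v1, v2, v3, v4 be four vertices forming a path v1, v2, v3, v4 in T (so that v1v2, v2v3, v3v4 are edges) whose classes alternate, i.e., v1, v3 ∈ V^0 and v2, v4 ∈ V^1. Then it cannot happen simultaneously that v1 < v3 and v4 < v2 in σ, nor simultaneously that v3 < v1 and v2 < v4 in σ. -/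
open SimpleGraph

/-- In a tree with a strongly consistent ordering and two-class partition, if
`v1, v2, v3, v4` form a path with alternating classes (`v1, v3 ∈ V^0`, `v2, v4 ∈ V^1`),
then it cannot happen simultaneously that `v1 < v3` and `v4 < v2`, nor simultaneously
that `v3 < v1` and `v2 < v4`. -/
theorem no_double_crossing {V : Type*} [Fintype V]
    (T : SimpleGraph V) (hT : T.IsTree)
    (σ : V → ℕ) (hσ : Function.Injective σ) (c : V → ℕ) (hc : ∀ v, c v < 2)
    (hsc : StronglyConsistent T σ c)
    (v1 v2 v3 v4 : V)
    (hne : v1 ≠ v2 ∧ v1 ≠ v3 ∧ v1 ≠ v4 ∧ v2 ≠ v3 ∧ v2 ≠ v4 ∧ v3 ≠ v4)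
    (e12 : T.Adj v1 v2) (e23 : T.Adj v2 v3) (e34 : T.Adj v3 v4)
    (hc1 : c v1 = 0) (hc3 : c v3 = 0) (hc2 : c v2 = 1) (hc4 : c v4 = 1) :
    ¬ (σ v1 < σ v3 ∧ σ v4 < σ v2) ∧ ¬ (σ v3 < σ v1 ∧ σ v2 < σ v4) := by
  obtain ⟨h12, h13, h14, h23, h24, h34⟩ := hne
  -- In a tree there is no edge `v1 v4`, since it would close a cycle.
  have e14 : ¬ T.Adj v1 v4 := by
    intro e14
    obtain ⟨p, hp, hup⟩ := hT.existsUnique_path v1 v4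
    have hA : (Walk.cons e14 Walk.nil : T.Walk v1 v4).IsPath := by
      simp [h14]
    have hB : (Walk.cons e12 (Walk.cons e23 (Walk.cons e34 Walk.nil)) :
        T.Walk v1 v4).IsPath := by
      simp [Walk.cons_isPath_iff, h12, h13, h14, h23, h24, h34]
    have h := (hup _ hA).trans (hup _ hB).symm
    have := congrArg Walk.length h
    simp [Walk.length_cons] at this
  have h14' : σ v1 ≠ σ v4 := fun h => h14 (hσ h)
  constructor
  · rintro ⟨h13lt, h42lt⟩
    rcases lt_or_gt_of_ne h14' with h | h
    · -- σ v1 < σ v4 < σ v2 : triple (v1, v4, v2) gives edge v1 v4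
      exact e14 ((hsc v1 v4 v2 h h42lt).2 (hc4.trans hc2.symm) e12.symm)
    · -- σ v4 < σ v1 < σ v3 : triple (v4, v1, v3) gives edge v4 v1
      exact e14 ((hsc v4 v1 v3 h h13lt).2 (hc1.trans hc3.symm) e34).symm
  · rintro ⟨h31lt, h24lt⟩
    rcases lt_or_gt_of_ne h14' with h | h
    · -- σ v3 < σ v1 < σ v4 : triple (v3, v1, v4) gives edge v4 v1
      exact e14 ((hsc v3 v1 v4 h31lt h).1 (hc3.trans hc1.symm) e34.symm).symm
    · -- σ v2 < σ v4 < σ v1 : triple (v2, v4, v1) gives edge v1 v4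
      exact e14 ((hsc v2 v4 v1 h24lt h).1 (hc2.trans hc4.symm) e12)
end

section
/- Let T be a tree with proper thinness equal to 2. If v is a vertex of T with degree at least 5, then at most 4 of the neighbors of v have degree greater than 1. -/
open SimpleGraph

lemma no_triangle_s18 {V : Type*} {T : SimpleGraph V} (hA : T.IsAcyclic) {a b c : V}
    (h1 : T.Adj a b) (h2 : T.Adj b c) (hac : a ≠ c) : ¬ T.Adj a c := by
  intro h3
  have hp : (Walk.cons h1 (Walk.cons h2 Walk.nil)).IsPath := by
    simp [Walk.isPath_def, h1.ne, h2.ne, hac]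
  have hq : (Walk.cons h3 Walk.nil).IsPath := by simp [Walk.isPath_def, hac]
  have := SimpleGraph.isAcyclic_iff_path_unique.mp hA ⟨_, hp⟩ ⟨_, hq⟩
  have hl := congrArg (fun p : T.Path a c => (p : T.Walk a c).length) this
  simp at hl

lemma no_c4 {V : Type*} {T : SimpleGraph V} (hA : T.IsAcyclic) {a b c d : V}
    (h1 : T.Adj a b) (h2 : T.Adj b c) (h3 : T.Adj c d)
    (hac : a ≠ c) (hbd : b ≠ d) (had : a ≠ d) : ¬ T.Adj a d := by
  intro h4
  have hp : (Walk.cons h1 (Walk.cons h2 (Walk.cons h3 Walk.nil))).IsPath := by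
    simp [Walk.isPath_def, h1.ne, h2.ne, h3.ne, hac, hbd, had]
  have hq : (Walk.cons h4 Walk.nil).IsPath := by simp [Walk.isPath_def, had]
  have := SimpleGraph.isAcyclic_iff_path_unique.mp hA ⟨_, hp⟩ ⟨_, hq⟩
  have hl := congrArg (fun p : T.Path a d => (p : T.Walk a d).length) this
  simp at hl

lemma exists_three {V : Type*} (S : Set V) (hS : S.Finite) (h : 3 ≤ S.ncard) :
    ∃ a b c, a ∈ S ∧ b ∈ S ∧ c ∈ S ∧ a ≠ b ∧ a ≠ c ∧ b ≠ c := by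
  obtain ⟨t, hts, ht3⟩ := Set.exists_subset_card_eq h
  rw [Set.ncard_eq_three] at ht3
  obtain ⟨a, b, c, hab, hac, hbc, rfl⟩ := ht3
  exact ⟨a, b, c, hts (by simp), hts (by simp), hts (by simp), hab, hac, hbc⟩

lemma sort3 {V : Type*} (P : V → Prop) (σ : V → ℕ) {a b c : V}
    (ha : P a) (hb : P b) (hc : P c)
    (hab : σ a ≠ σ b) (hac : σ a ≠ σ c) (hbc : σ b ≠ σ c) :
    ∃ x y z, P x ∧ P y ∧ P z ∧ σ x < σ y ∧ σ y < σ z := by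
  rcases lt_or_gt_of_ne hab with h1 | h1 <;>
  rcases lt_or_gt_of_ne hac with h2 | h2 <;>
  rcases lt_or_gt_of_ne hbc with h3 | h3 <;>
  first
    | exact ⟨a, b, c, ha, hb, hc, by omega, by omega⟩
    | exact ⟨a, c, b, ha, hc, hb, by omega, by omega⟩
    | exact ⟨b, a, c, hb, ha, hc, by omega, by omega⟩
    | exact ⟨b, c, a, hb, hc, ha, by omega, by omega⟩
    | exact ⟨c, a, b, hc, ha, hb, by omega, by omega⟩
    | exact ⟨c, b, a, hc, hb, ha, by omega, by omega⟩

/-- In a tree with proper thinness 2, every vertex of degree at least 5 has at most 4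
neighbors of degree greater than 1. -/
theorem pthin_two_degree_five {V : Type*} [Fintype V]
    (T : SimpleGraph V) (hT : T.IsTree) (h2 : pthin T = 2)
    (v : V) (hv : 5 ≤ deg T v) :
    ({w : V | T.Adj v w ∧ 1 < deg T w}).ncard ≤ 4 := by
  classical
  -- Obtain a strongly consistent ordering and 2-coloring.
  have hne : {k | ProperKThin T k}.Nonempty := by
    by_contra h
    rw [Set.not_nonempty_iff_eq_empty] at h
    rw [pthin, h, Nat.sInf_empty] at h2
    exact absurd h2 (by norm_num)
  have hmem : ProperKThin T 2 := by
    have h := Nat.sInf_mem hne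
    rwa [show sInf {k | ProperKThin T k} = 2 from h2] at h
  obtain ⟨σ, c, hσ, hc2, sc⟩ := hmem
  set S : Set V := {w : V | T.Adj v w ∧ 1 < deg T w} with hSdef
  by_contra hcon
  push_neg at hcon
  have hSfin : S.Finite := Set.toFinite _
  have hAcy := hT.IsAcyclic
  -- no two distinct neighbors of v are adjacent
  have hnadj : ∀ a b : V, T.Adj v a → T.Adj v b → a ≠ b → ¬ T.Adj a b :=
    fun a b h1 h2 hne' => no_triangle_s18 hAcy h1.symm h2 hne'
  -- at most 2 neighbors of v in S have the same color as v
  set A : Set V := {w ∈ S | c w = c v} with hAdef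
  have hA2 : A.ncard ≤ 2 := by
    by_contra hA3
    push_neg at hA3
    obtain ⟨a, b, d, haa, hbb, hdd, hab, had, hbd⟩ :=
      exists_three A (Set.toFinite _) (by omega)
    obtain ⟨x, y, z, hx, hy, hz, hxy, hyz⟩ :=
      sort3 (· ∈ A) σ haa hbb hdd (hσ.ne hab) (hσ.ne had) (hσ.ne hbd)
    have hxv : T.Adj v x := hx.1.1
    have hyv : T.Adj v y := hy.1.1
    have hzv : T.Adj v z := hz.1.1
    have hvy : v ≠ y := hyv.ne
    rcases lt_or_gt_of_ne (hσ.ne hvy) with h | h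
    · -- σ v < σ y < σ z
      have hadj := (sc v y z h hyz).1 hy.2.symm hzv.symm
      exact hnadj y z hyv hzv (fun e => by subst e; omega) hadj.symm
    · -- σ x < σ y < σ v
      have hadj := (sc x y v hxy h).2 hy.2 hxv
      exact hnadj x y hxv hyv (fun e => by subst e; omega) hadj
  -- so S \ A has at least 3 elements
  have hsub : A ⊆ S := fun w hw => hw.1
  have hdiff : 3 ≤ (S \ A).ncard := by
    have := Set.ncard_diff hsub (Set.toFinite _)
    omega
  obtain ⟨a, b, d, haa, hbb, hdd, hab, had, hbd⟩ :=
    exists_three (S \ A) (Set.toFinite _) hdiff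
  obtain ⟨w1, w2, w3, h1, h2', h3, h12, h23⟩ :=
    sort3 (· ∈ S \ A) σ haa hbb hdd (hσ.ne hab) (hσ.ne had) (hσ.ne hbd)
  -- unpack memberships
  have hw1v : T.Adj v w1 := h1.1.1
  have hw2v : T.Adj v w2 := h2'.1.1
  have hw3v : T.Adj v w3 := h3.1.1
  have hc1 : c w1 ≠ c v := fun e => h1.2 ⟨h1.1, e⟩
  have hc2' : c w2 ≠ c v := fun e => h2'.2 ⟨h2'.1, e⟩
  have hc3 : c w3 ≠ c v := fun e => h3.2 ⟨h3.1, e⟩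
  have hcc12 : c w1 = c w2 := by have := hc2 w1; have := hc2 w2; have := hc2 v; omega
  have hcc23 : c w2 = c w3 := by have := hc2 w2; have := hc2 w3; have := hc2 v; omega
  have hw12 : w1 ≠ w2 := fun e => by subst e; omega
  have hw13 : w1 ≠ w3 := fun e => by subst e; omega
  have hw23 : w2 ≠ w3 := fun e => by subst e; omega
  -- pick a neighbor x2 of w2 other than v
  have hx2ex : ∃ x, T.Adj w2 x ∧ x ≠ v := by
    have hd : 1 < (T.neighborSet w2).ncard := h2'.1.2
    by_contra hno
    push_neg at hno
    have hsub2 : T.neighborSet w2 ⊆ {v} := fun x hx => hno x hx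
    have := Set.ncard_le_ncard hsub2 (Set.finite_singleton v)
    rw [Set.ncard_singleton] at this
    omega
  obtain ⟨x2, hw2x2, hx2v⟩ := hx2ex
  -- non-adjacency facts for x2
  have hx2w1 : x2 ≠ w1 := fun e => hnadj w2 w1 hw2v hw1v hw12.symm (e ▸ hw2x2)
  have hx2w3 : x2 ≠ w3 := fun e => hnadj w2 w3 hw2v hw3v hw23 (e ▸ hw2x2)
  have hnvx2 : ¬ T.Adj v x2 := no_triangle_s18 hAcy hw2v hw2x2 (Ne.symm hx2v)
  have hnw1x2 : ¬ T.Adj w1 x2 :=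
    no_c4 hAcy hw1v.symm hw2v hw2x2 hw12 (Ne.symm hx2v) (Ne.symm hx2w1)
  have hnw3x2 : ¬ T.Adj w3 x2 :=
    no_c4 hAcy hw3v.symm hw2v hw2x2 hw23.symm (Ne.symm hx2v) (Ne.symm hx2w3)
  -- order facts
  have hb2a3 : σ x2 < σ w3 := by
    rcases lt_trichotomy (σ x2) (σ w3) with h | h | h
    · exact h
    · exact absurd (hσ h) hx2w3
    · exact absurd ((sc w2 w3 x2 h23 h).1 hcc23 hw2x2.symm).symm hnw3x2
  have ha1b2 : σ w1 < σ x2 := by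
    rcases lt_trichotomy (σ w1) (σ x2) with h | h | h
    · exact h
    · exact absurd (hσ h) (Ne.symm hx2w1)
    · exact absurd ((sc x2 w1 w2 h h12).2 hcc12 hw2x2).symm hnw1x2
  have hE32 : ¬ (σ v < σ x2 ∧ σ x2 < σ w3) := by
    rintro ⟨u1, u2⟩
    have hcx2 : c x2 = c v ∨ c x2 = c w3 := by
      have := hc2 x2; have := hc2 v; have := hc2 w3; omega
    rcases hcx2 with h | h
    · exact hnw3x2 ((sc v x2 w3 u1 u2).1 h.symm hw3v.symm)
    · exact hnvx2 ((sc v x2 w3 u1 u2).2 h hw3v.symm)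
  have hE12 : ¬ (σ w1 < σ x2 ∧ σ x2 < σ v) := by
    rintro ⟨u1, u2⟩
    have hcx2 : c x2 = c w1 ∨ c x2 = c v := by
      have := hc2 x2; have := hc2 v; have := hc2 w1; omega
    rcases hcx2 with h | h
    · exact hnvx2 ((sc w1 x2 v u1 u2).1 h.symm hw1v)
    · exact hnw1x2 ((sc w1 x2 v u1 u2).2 h hw1v)
  have hx2v' : σ x2 ≠ σ v := hσ.ne hx2v
  omega
end

section
/- Let T be a tree with proper thinness equal to 2. Then there exists a simple path C0 in T such that: (1) every vertex of T with degree at least 4 lies on C0; and (2) every vertex v of degree 3 that does not lie on C0 is adjacent to some vertex w of C0 whose degree is at most 3. -/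
open SimpleGraph

namespace PthinAux

variable {V : Type*}

lemma path_eq {T : SimpleGraph V} (hA : T.IsAcyclic) {x y : V} {p q : T.Walk x y}
    (hp : p.IsPath) (hq : q.IsPath) : p = q := by
  have := (isAcyclic_iff_path_unique.mp hA) (⟨p, hp⟩ : T.Path x y) ⟨q, hq⟩
  exact congrArg Subtype.val this

lemma no_triangle {T : SimpleGraph V} (hA : T.IsAcyclic) {x y z : V}
    (h1 : T.Adj x y) (h2 : T.Adj y z) (h3 : T.Adj x z) : False := by
  have hp : (Walk.cons h3 Walk.nil : T.Walk x z).IsPath := by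
    rw [Walk.isPath_def]
    simp [h3.ne]
  have hq : (Walk.cons h1 (Walk.cons h2 Walk.nil) : T.Walk x z).IsPath := by
    rw [Walk.isPath_def]
    simp [h1.ne, h2.ne, h3.ne]
  have := path_eq hA hp hq
  have := congrArg Walk.length this
  simp at this

lemma no_square {T : SimpleGraph V} (hA : T.IsAcyclic) {a x b y : V}
    (h1 : T.Adj a x) (h2 : T.Adj x b) (h3 : T.Adj a y) (h4 : T.Adj y b)
    (hxy : x ≠ y) (hab : a ≠ b) : False := by
  have hp : (Walk.cons h1 (Walk.cons h2 Walk.nil) : T.Walk a b).IsPath := by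
    rw [Walk.isPath_def]; simp [h1.ne, h2.ne, hab]
  have hq : (Walk.cons h3 (Walk.cons h4 Walk.nil) : T.Walk a b).IsPath := by
    rw [Walk.isPath_def]; simp [h3.ne, h4.ne, hab]
  have heq := path_eq hA hp hq
  have : x ∈ (Walk.cons h3 (Walk.cons h4 Walk.nil) : T.Walk a b).support := by
    rw [← heq]; simp
  simp [Walk.support_cons] at this
  rcases this with h | h | h
  · exact h1.ne h.symm
  · exact hxy h
  · exact h2.ne h

section SC

variable {T : SimpleGraph V} {σ c : V → ℕ}

lemma R1 (hsc : StronglyConsistent T σ c) {r s t : V} (h1 : σ r < σ s) (h2 : σ s < σ t)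
    (hcc : c r = c s) (ha : T.Adj t r) : T.Adj t s := (hsc r s t h1 h2).1 hcc ha

lemma R2 (hsc : StronglyConsistent T σ c) {r s t : V} (h1 : σ r < σ s) (h2 : σ s < σ t)
    (hcc : c s = c t) (ha : T.Adj t r) : T.Adj r s := (hsc r s t h1 h2).2 hcc ha

lemma two_earlier (hA : T.IsAcyclic) (hsc : StronglyConsistent T σ c) {r s v : V}
    (h1 : σ r < σ s) (h2 : σ s < σ v) (ar : T.Adj v r) (as' : T.Adj v s)
    (hcls : c s = c v) : False :=
  no_triangle hA (R2 hsc h1 h2 hcls ar) as'.symm ar.symm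

lemma two_later (hA : T.IsAcyclic) (hsc : StronglyConsistent T σ c) {v s t : V}
    (h1 : σ v < σ s) (h2 : σ s < σ t) (as' : T.Adj v s) (at' : T.Adj v t)
    (hcls : c s = c v) : False :=
  no_triangle hA as' (R1 hsc h1 h2 hcls.symm at'.symm).symm at'

lemma class2 (hc : ∀ v, c v < 2) {a b x : V} (h1 : c a ≠ c x) (h2 : c b ≠ c x) :
    c a = c b := by
  have := hc a; have := hc b; have := hc x; omega

/-- interior vertex adjacent to the endpoints, by class -/
lemma interior_high (hsc : StronglyConsistent T σ c) {a b x : V} (hab : T.Adj a b)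
    (h1 : σ a < σ x) (h2 : σ x < σ b) (hcl : c x = c a) : T.Adj b x :=
  R1 hsc h1 h2 hcl.symm hab.symm

lemma interior_low (hsc : StronglyConsistent T σ c) {a b x : V} (hab : T.Adj a b)
    (h1 : σ a < σ x) (h2 : σ x < σ b) (hcl : c x = c b) : T.Adj a x :=
  R2 hsc h1 h2 hcl hab.symm

lemma interior_triangle (hA : T.IsAcyclic) (hsc : StronglyConsistent T σ c) {a b x : V}
    (hab : T.Adj a b) (h1 : σ a < σ x) (h2 : σ x < σ b) (hcab : c a = c b)
    (hcl : c x = c a) : False :=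
  no_triangle hA (interior_low hsc hab h1 h2 (hcl.trans hcab))
    (interior_high hsc hab h1 h2 hcl).symm hab

/-- A walk whose endpoints' σ-values straddle v, with v not on the walk,
contains a σ-spanning edge. -/
lemma spanning (hσ : Function.Injective σ) {v : V} {x y : V} (W : T.Walk x y) :
    σ x < σ v → σ v < σ y → v ∉ W.support →
    ∃ a b, a ∈ W.support ∧ b ∈ W.support ∧ T.Adj a b ∧ σ a < σ v ∧ σ v < σ b := by
  induction W with
  | nil => intro h1 h2 _; exact absurd (h1.trans h2) (lt_irrefl _)
  | @cons x z y h q ih =>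
    intro h1 h2 hv
    have hvq : v ∉ q.support := by
      intro hmem; exact hv (by simp [Walk.support_cons, hmem])
    rcases lt_trichotomy (σ v) (σ z) with hlt | heq | hgt
    · exact ⟨x, z, by simp [Walk.support_cons],
        by simp [Walk.support_cons, q.start_mem_support], h, h1, hlt⟩
    · exfalso; exact hvq (hσ heq ▸ q.start_mem_support)
    · obtain ⟨a, b, ha, hb, hab, ha1, hb1⟩ := ih hgt h2 hvq
      exact ⟨a, b, by simp [Walk.support_cons, ha], by simp [Walk.support_cons, hb],
        hab, ha1, hb1⟩

end SC

section Paths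

variable {T : SimpleGraph V} {m M : V}

/-- a path between two vertices on a walk, staying within the walk's support -/
lemma walk_seg (P : T.Walk m M) {x y : V} (hx : x ∈ P.support) (hy : y ∈ P.support) :
    ∃ q : T.Walk x y, q.IsPath ∧ ∀ u ∈ q.support, u ∈ P.support := by
  classical
  refine ⟨((P.takeUntil x hx).reverse.append (P.takeUntil y hy)).bypass,
    Walk.bypass_isPath _, fun u hu => ?_⟩
  have h1 := Walk.support_bypass_subset _ hu
  rw [Walk.support_append] at h1
  rcases List.mem_append.mp h1 with h2 | h2
  · rw [Walk.support_reverse] at h2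
    exact Walk.support_takeUntil_subset P hx (List.mem_reverse.mp h2)
  · exact Walk.support_takeUntil_subset P hy (List.mem_of_mem_tail h2)

lemma unique_attach (hA : T.IsAcyclic) (P : T.Walk m M) {v x y : V}
    (hv : v ∉ P.support) (hx : x ∈ P.support) (hy : y ∈ P.support)
    (hvx : T.Adj v x) (hvy : T.Adj v y) : x = y := by
  by_contra hne
  obtain ⟨q, hq, hqs⟩ := walk_seg P hx hy
  have hp : (Walk.cons hvx.symm (Walk.cons hvy Walk.nil) : T.Walk x y).IsPath := by
    rw [Walk.isPath_def]; simp [hvx.ne', hvy.ne, hne]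
  have heq := path_eq hA hp hq
  have : v ∈ q.support := by rw [← heq]; simp
  exact hv (hqs v this)

/-- x - v - u - y with x,y on the path, v,u off the path: impossible -/
lemma offpath_chain (hA : T.IsAcyclic) (P : T.Walk m M) {v u x y : V}
    (hv : v ∉ P.support) (hu : u ∉ P.support) (hx : x ∈ P.support) (hy : y ∈ P.support)
    (h1 : T.Adj x v) (h2 : T.Adj v u) (h3 : T.Adj u y) : False := by
  by_cases hxy : x = y
  · subst hxy; exact no_triangle hA h1 h2 h3.symm
  · obtain ⟨q, hq, hqs⟩ := walk_seg P hx hy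
    have hp : (Walk.cons h1 (Walk.cons h2 (Walk.cons h3 Walk.nil)) : T.Walk x y).IsPath := by
      rw [Walk.isPath_def]
      have hxu : x ≠ u := fun h => hu (h ▸ hx)
      have hvy : v ≠ y := fun h => hv (h ▸ hy)
      simp [h1.ne, h2.ne, h3.ne, hxy, hxu, hvy]
    have heq := path_eq hA hp hq
    have : v ∈ q.support := by rw [← heq]; simp
    exact hv (hqs v this)

/-- p1 - y1 - v - y2 - p2 with p1,p2 on the path, v,y1,y2 off: impossible -/
lemma offpath_chain3 (hA : T.IsAcyclic) (P : T.Walk m M) {v y1 y2 p1 p2 : V}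
    (hv : v ∉ P.support) (h1 : y1 ∉ P.support) (h2 : y2 ∉ P.support)
    (hp1 : p1 ∈ P.support) (hp2 : p2 ∈ P.support)
    (a1 : T.Adj p1 y1) (a2 : T.Adj y1 v) (a3 : T.Adj v y2) (a4 : T.Adj y2 p2)
    (hne : y1 ≠ y2) (hpp : p1 ≠ p2) : False := by
  obtain ⟨q, hq, hqs⟩ := walk_seg P hp1 hp2
  have hp : (Walk.cons a1 (Walk.cons a2 (Walk.cons a3 (Walk.cons a4 Walk.nil))) :
      T.Walk p1 p2).IsPath := by
    rw [Walk.isPath_def]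
    have e1 : p1 ≠ v := fun h => hv (h ▸ hp1)
    have e2 : p1 ≠ y2 := fun h => h2 (h ▸ hp1)
    have e3 : y1 ≠ p2 := fun h => h1 (h ▸ hp2)
    have e4 : v ≠ p2 := fun h => hv (h ▸ hp2)
    simp [a1.ne, a2.ne, a3.ne, a4.ne, e1, e2, e3, e4, hne, hpp]
  have heq := path_eq hA hp hq
  have : v ∈ q.support := by rw [← heq]; simp
  exact hv (hqs v this)

end Paths

end PthinAux
namespace PthinAux

variable {V : Type*}

lemma four_distinct {s : Set V} (hfin : s.Finite) (h : 4 ≤ s.ncard) :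
    ∃ a ∈ s, ∃ b ∈ s, ∃ c ∈ s, ∃ d ∈ s,
      a ≠ b ∧ a ≠ c ∧ a ≠ d ∧ b ≠ c ∧ b ≠ d ∧ c ≠ d := by
  obtain ⟨a, ha⟩ : s.Nonempty := Set.nonempty_of_ncard_ne_zero (by omega)
  have h1 : (s \ {a}).ncard = s.ncard - 1 := Set.ncard_diff_singleton_of_mem ha
  obtain ⟨b, hb⟩ : (s \ {a}).Nonempty := Set.nonempty_of_ncard_ne_zero (by omega)
  have h2 : ((s \ {a}) \ {b}).ncard = (s \ {a}).ncard - 1 :=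
    Set.ncard_diff_singleton_of_mem hb
  obtain ⟨c, hc⟩ : ((s \ {a}) \ {b}).Nonempty := Set.nonempty_of_ncard_ne_zero (by omega)
  have h3 : (((s \ {a}) \ {b}) \ {c}).ncard = ((s \ {a}) \ {b}).ncard - 1 :=
    Set.ncard_diff_singleton_of_mem hc
  obtain ⟨d, hd⟩ : (((s \ {a}) \ {b}) \ {c}).Nonempty :=
    Set.nonempty_of_ncard_ne_zero (by omega)
  simp only [Set.mem_diff, Set.mem_singleton_iff] at hb hc hd
  exact ⟨a, ha, b, hb.1, c, hc.1.1, d, hd.1.1.1,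
    fun e => hb.2 e.symm, fun e => hc.1.2 e.symm, fun e => hd.1.1.2 e.symm,
    fun e => hc.2 e.symm, fun e => hd.1.2 e.symm, fun e => hd.2 e.symm⟩

section Core

variable {T : SimpleGraph V} {σ c : V → ℕ} {m M : V}

/-- "special" wrt the path: on it, or adjacent to a vertex on it. -/
def Sp (T : SimpleGraph V) (L : List V) (u : V) : Prop :=
  u ∈ L ∨ ∃ p ∈ L, T.Adj u p

/-- Key lemma: two adjacent off-path vertices, one of which has no neighbor on the
path, have the same class. -/
lemma class_eq_nonspecial (hA : T.IsAcyclic) (hσ : Function.Injective σ)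
    (hc : ∀ v, c v < 2) (hsc : StronglyConsistent T σ c) (P : T.Walk m M)
    (hm : ∀ x, σ m ≤ σ x) (hM : ∀ x, σ x ≤ σ M)
    {u v : V} (hu : u ∉ P.support) (hv : v ∉ P.support) (huv : T.Adj u v)
    (hns : ∀ p ∈ P.support, ¬T.Adj u p) : c u = c v := by
  have hum : σ m < σ u := by
    rcases lt_or_eq_of_le (hm u) with h | h
    · exact h
    · exact absurd (hσ h.symm) (fun e => hu (e ▸ P.start_mem_support))
  have huM : σ u < σ M := by
    rcases lt_or_eq_of_le (hM u) with h | h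
    · exact h
    · exact absurd (hσ h) (fun e => hu (e ▸ P.end_mem_support))
  obtain ⟨a, b, haS, hbS, hab, ha1, hb1⟩ := spanning hσ P hum huM hu
  have hua : ¬T.Adj u a := hns a haS
  have hub : ¬T.Adj u b := hns b hbS
  have hca : c a ≠ c u := fun h => hub (interior_high hsc hab ha1 hb1 h.symm).symm
  have hcb : c b ≠ c u := fun h => hua (interior_low hsc hab ha1 hb1 h.symm).symm
  by_contra hcv
  have hcva : c v = c a := class2 hc (Ne.symm hcv) hca
  have huvne : σ u ≠ σ v := fun h => huv.ne (hσ h)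
  rcases lt_or_gt_of_ne huvne with hlt | hgt
  · -- u < v
    have hbv : σ b ≠ σ v := fun h => hv (hσ h ▸ hbS)
    rcases lt_or_gt_of_ne hbv with h1 | h1
    · -- b < v : triple (u, b, v), R2
      have hcbv : c b = c v := class2 hc hcb (Ne.symm hcv)
      exact hub (R2 hsc hb1 h1 hcbv huv.symm)
    · -- v < b : interior triangle
      exact interior_triangle hA hsc hab (ha1.trans hlt) h1
        (class2 hc hca hcb) hcva
  · -- v < u
    have hav : σ a ≠ σ v := fun h => hv (hσ h ▸ haS)
    rcases lt_or_gt_of_ne hav with h1 | h1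
    · -- a < v : interior
      exact interior_triangle hA hsc hab h1 (hgt.trans hb1)
        (class2 hc hca hcb) hcva
    · -- v < a : triple (v, a, u), R1
      exact hua (R1 hsc h1 ha1 hcva huv)

lemma special_unique (hA : T.IsAcyclic) (P : T.Walk m M) {v y1 y2 : V}
    (hv : v ∉ P.support) (h1 : T.Adj v y1) (h2 : T.Adj v y2)
    (s1 : Sp T P.support y1) (s2 : Sp T P.support y2) : y1 = y2 := by
  by_contra hne
  by_cases k1 : y1 ∈ P.support
  · by_cases k2 : y2 ∈ P.support
    · exact hne (unique_attach hA P hv k1 k2 h1 h2)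
    · obtain ⟨p2, hp2, hy2p⟩ := s2.resolve_left k2
      exact offpath_chain hA P hv k2 k1 hp2 h1.symm h2 hy2p
  · by_cases k2 : y2 ∈ P.support
    · obtain ⟨p1, hp1, hy1p⟩ := s1.resolve_left k1
      exact offpath_chain hA P hv k1 k2 hp1 h2.symm h1 hy1p
    · obtain ⟨p1, hp1, hy1p⟩ := s1.resolve_left k1
      obtain ⟨p2, hp2, hy2p⟩ := s2.resolve_left k2
      by_cases hpp : p1 = p2
      · subst hpp
        exact no_square hA hy1p.symm h1.symm hy2p.symm h2.symm hne
          (fun h => hv (h ▸ hp1))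
      · exact offpath_chain3 hA P hv k1 k2 hp1 hp2 hy1p.symm h1.symm h2 hy2p hne hpp

/-- both σ-earlier (or both σ-later) distinct neighbors of v with class c v : impossible -/
lemma both_earlier (hA : T.IsAcyclic) (hσ : Function.Injective σ)
    (hsc : StronglyConsistent T σ c) {v u u' : V} (hne : u ≠ u')
    (a1 : T.Adj v u) (a2 : T.Adj v u') (c1 : c u = c v) (c2 : c u' = c v)
    (s1 : σ u < σ v) (s2 : σ u' < σ v) : False := by
  rcases lt_or_gt_of_ne (fun h => hne (hσ h) : σ u ≠ σ u') with h | h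
  · exact two_earlier hA hsc h s2 a1 a2 c2
  · exact two_earlier hA hsc h s1 a2 a1 c1

lemma both_later (hA : T.IsAcyclic) (hσ : Function.Injective σ)
    (hsc : StronglyConsistent T σ c) {v u u' : V} (hne : u ≠ u')
    (a1 : T.Adj v u) (a2 : T.Adj v u') (c1 : c u = c v) (c2 : c u' = c v)
    (s1 : σ v < σ u) (s2 : σ v < σ u') : False := by
  rcases lt_or_gt_of_ne (fun h => hne (hσ h) : σ u ≠ σ u') with h | h
  · exact two_later hA hsc s1 h a1 a2 c1
  · exact two_later hA hsc s2 h a2 a1 c2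

end Core

end PthinAux
namespace PthinAux

variable {V : Type*}

section Main

variable {T : SimpleGraph V} {σ c : V → ℕ} {m M : V}

lemma not_sp (hA : T.IsAcyclic) (hσ : Function.Injective σ) (hc : ∀ v, c v < 2)
    (hsc : StronglyConsistent T σ c) (P : T.Walk m M)
    (hm : ∀ x, σ m ≤ σ x) (hM : ∀ x, σ x ≤ σ M)
    {v u : V} (hv : v ∉ P.support) (hadj : T.Adj v u)
    (hns : ¬Sp T P.support u) : c u = c v ∧ u ∉ P.support := by
  rw [Sp, not_or, not_exists] at hns
  have h2 : ∀ p ∈ P.support, ¬T.Adj u p := by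
    intro p hp h
    exact hns.2 p ⟨hp, h⟩
  exact ⟨class_eq_nonspecial hA hσ hc hsc P hm hM hns.1 hv hadj.symm h2, hns.1⟩

/-- no off-path vertex has degree ≥ 4 -/
lemma offpath_deg4 [Fintype V] (hA : T.IsAcyclic) (hσ : Function.Injective σ)
    (hc : ∀ v, c v < 2) (hsc : StronglyConsistent T σ c) (P : T.Walk m M)
    (hm : ∀ x, σ m ≤ σ x) (hM : ∀ x, σ x ≤ σ M)
    {v : V} (hv : v ∉ P.support) (h4 : 4 ≤ (T.neighborSet v).ncard) : False := by
  obtain ⟨a, ha, b, hb, d, hd, e, he, hab, had, hae, hbd, hbe, hde⟩ :=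
    four_distinct (Set.toFinite _) h4
  rw [SimpleGraph.mem_neighborSet] at ha hb hd he
  have key : ∃ x1 x2 x3 : V, x1 ≠ x2 ∧ x1 ≠ x3 ∧ x2 ≠ x3 ∧ T.Adj v x1 ∧ T.Adj v x2 ∧
      T.Adj v x3 ∧ ¬Sp T P.support x1 ∧ ¬Sp T P.support x2 ∧ ¬Sp T P.support x3 := by
    by_cases sa : Sp T P.support a
    · exact ⟨b, d, e, hbd, hbe, hde, hb, hd, he,
        fun s => hab (special_unique hA P hv ha hb sa s),
        fun s => had (special_unique hA P hv ha hd sa s),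
        fun s => hae (special_unique hA P hv ha he sa s)⟩
    · by_cases sb : Sp T P.support b
      · exact ⟨a, d, e, had, hae, hde, ha, hd, he, sa,
          fun s => hbd (special_unique hA P hv hb hd sb s),
          fun s => hbe (special_unique hA P hv hb he sb s)⟩
      · by_cases sd : Sp T P.support d
        · exact ⟨a, b, e, hab, hae, hbe, ha, hb, he, sa, sb,
            fun s => hde (special_unique hA P hv hd he sd s)⟩
        · exact ⟨a, b, d, hab, had, hbd, ha, hb, hd, sa, sb, sd⟩
  obtain ⟨x1, x2, x3, d12, d13, d23, A1, A2, A3, N1, N2, N3⟩ := key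
  obtain ⟨c1, -⟩ := not_sp hA hσ hc hsc P hm hM hv A1 N1
  obtain ⟨c2, -⟩ := not_sp hA hσ hc hsc P hm hM hv A2 N2
  obtain ⟨c3, -⟩ := not_sp hA hσ hc hsc P hm hM hv A3 N3
  have e1 : σ x1 ≠ σ v := fun h => A1.ne' (hσ h)
  have e2 : σ x2 ≠ σ v := fun h => A2.ne' (hσ h)
  have e3 : σ x3 ≠ σ v := fun h => A3.ne' (hσ h)
  rcases lt_or_gt_of_ne e1 with s1 | s1 <;> rcases lt_or_gt_of_ne e2 with s2 | s2 <;>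
    rcases lt_or_gt_of_ne e3 with s3 | s3
  · exact both_earlier hA hσ hsc d12 A1 A2 c1 c2 s1 s2
  · exact both_earlier hA hσ hsc d12 A1 A2 c1 c2 s1 s2
  · exact both_earlier hA hσ hsc d13 A1 A3 c1 c3 s1 s3
  · exact both_later hA hσ hsc d23 A2 A3 c2 c3 s2 s3
  · exact both_earlier hA hσ hsc d23 A2 A3 c2 c3 s2 s3
  · exact both_later hA hσ hsc d13 A1 A3 c1 c3 s1 s3
  · exact both_later hA hσ hsc d12 A1 A2 c1 c2 s1 s2
  · exact both_later hA hσ hsc d12 A1 A2 c1 c2 s1 s2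

/-- core of the degree-3 analysis -/
lemma deg3_core [Fintype V] (hA : T.IsAcyclic) (hσ : Function.Injective σ)
    (hc : ∀ v, c v < 2) (hsc : StronglyConsistent T σ c) (P : T.Walk m M)
    (hm : ∀ x, σ m ≤ σ x) (hM : ∀ x, σ x ≤ σ M)
    {v w u u' : V} (hv : v ∉ P.support)
    (hN : T.neighborSet v = {w, u, u'})
    (hwu : w ≠ u) (hwu' : w ≠ u') (huu' : u ≠ u')
    (hcu : c u = c v) (hcu' : c u' = c v)
    (huS : u ∉ P.support) (hu'S : u' ∉ P.support)
    (hs1 : σ u < σ v) (hs2 : σ v < σ u') :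
    ∃ w' ∈ P.support, T.Adj v w' ∧ deg T w' ≤ 3 := by
  have Avw : T.Adj v w := by
    rw [← SimpleGraph.mem_neighborSet, hN]; simp
  have Avu : T.Adj v u := by
    rw [← SimpleGraph.mem_neighborSet, hN]; simp
  have Avu' : T.Adj v u' := by
    rw [← SimpleGraph.mem_neighborSet, hN]; simp
  have hnbr : ∀ q, T.Adj v q → q = w ∨ q = u ∨ q = u' := by
    intro q h
    have h2 : q ∈ T.neighborSet v := h
    rw [hN] at h2; simpa using h2
  -- step 1 : w is on the path
  have hwS : w ∈ P.support := by
    by_contra hwS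
    have hvnoP : ∀ p ∈ P.support, ¬T.Adj v p := by
      intro p hp h
      rcases hnbr p h with rfl | rfl | rfl
      · exact hwS hp
      · exact huS hp
      · exact hu'S hp
    have hcw : c v = c w :=
      class_eq_nonspecial hA hσ hc hsc P hm hM hv hwS Avw hvnoP
    have hwv : σ w ≠ σ v := fun h => Avw.ne' (hσ h)
    rcases lt_or_gt_of_ne hwv with h | h
    · exact both_earlier hA hσ hsc hwu.symm Avu Avw hcu hcw.symm hs1 h
    · exact both_later hA hσ hsc hwu' Avw Avu' hcw.symm hcu' h hs2
  -- step 2 : class and position of w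
  have hwv : σ w ≠ σ v := fun h => Avw.ne' (hσ h)
  have hσwu : σ w ≠ σ u := fun h => hwu (hσ h)
  have hσwu' : σ w ≠ σ u' := fun h => hwu' (hσ h)
  have hstep2 : c w ≠ c v ∧ σ u < σ w ∧ σ w < σ u' := by
    rcases lt_or_gt_of_ne hwv with h | h
    · rcases lt_or_gt_of_ne hσwu with h2 | h2
      · exact (two_earlier hA hsc h2 hs1 Avw Avu hcu).elim
      · exact ⟨fun hclw => two_earlier hA hsc h2 h Avu Avw hclw, h2, h.trans hs2⟩
    · rcases lt_or_gt_of_ne hσwu' with h2 | h2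
      · exact ⟨fun hclw => two_later hA hsc h h2 Avw Avu' hclw, hs1.trans h, h2⟩
      · exact (two_later hA hsc hs2 h2 Avu' Avw hcu').elim
  obtain ⟨hcwv, huw, hwu'σ⟩ := hstep2
  refine ⟨w, hwS, Avw, ?_⟩
  by_contra hdeg
  have h4 : 4 ≤ (T.neighborSet w).ncard := by
    rw [deg] at hdeg; omega
  have hnwu : ¬T.Adj w u := fun h => no_triangle hA Avw h Avu
  have hnwu' : ¬T.Adj w u' := fun h => no_triangle hA Avw h Avu'
  -- pick 3 distinct neighbors of w, all ≠ v
  obtain ⟨a, ha, b, hb, d, hd, e, he, hab, had, hae, hbd, hbe, hde⟩ :=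
    four_distinct (Set.toFinite _) h4
  rw [SimpleGraph.mem_neighborSet] at ha hb hd he
  have key : ∃ t1 t2 t3 : V, t1 ≠ t2 ∧ t1 ≠ t3 ∧ t2 ≠ t3 ∧ T.Adj w t1 ∧ T.Adj w t2 ∧
      T.Adj w t3 ∧ t1 ≠ v ∧ t2 ≠ v ∧ t3 ≠ v := by
    by_cases hav : a = v
    · exact ⟨b, d, e, hbd, hbe, hde, hb, hd, he, fun h => hab (h.trans hav.symm).symm,
        fun h => had (h.trans hav.symm).symm, fun h => hae (h.trans hav.symm).symm⟩
    · by_cases hbv : b = v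
      · exact ⟨a, d, e, had, hae, hde, ha, hd, he, hav,
          fun h => hbd (h.trans hbv.symm).symm, fun h => hbe (h.trans hbv.symm).symm⟩
      · by_cases hdv : d = v
        · exact ⟨a, b, e, hab, hae, hbe, ha, hb, he, hav, hbv,
            fun h => hde (h.trans hdv.symm).symm⟩
        · exact ⟨a, b, d, hab, had, hbd, ha, hb, hd, hav, hbv, hdv⟩
  obtain ⟨t1, t2, t3, d12, d13, d23, A1, A2, A3, n1, n2, n3⟩ := key
  -- a same-side pair of neighbors of w gives q ≠ v adjacent to w with c q ≠ c w
  have pairAny : ∀ p r : V, T.Adj w p → T.Adj w r → p ≠ v → r ≠ v → p ≠ r →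
      ((σ p < σ w ∧ σ r < σ w) ∨ (σ w < σ p ∧ σ w < σ r)) →
      ∃ q, T.Adj w q ∧ q ≠ v ∧ c q ≠ c w := by
    intro p r hp hr hpv hrv hpr hside
    have hσpr : σ p ≠ σ r := fun h => hpr (hσ h)
    rcases hside with ⟨i1, i2⟩ | ⟨i1, i2⟩
    · rcases lt_or_gt_of_ne hσpr with h | h
      · exact ⟨r, hr, hrv, fun hcl => two_earlier hA hsc h i2 hp hr hcl⟩
      · exact ⟨p, hp, hpv, fun hcl => two_earlier hA hsc h i1 hr hp hcl⟩
    · rcases lt_or_gt_of_ne hσpr with h | h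
      · exact ⟨p, hp, hpv, fun hcl => two_later hA hsc i1 h hp hr hcl⟩
      · exact ⟨r, hr, hrv, fun hcl => two_later hA hsc i2 h hr hp hcl⟩
  have e1 : σ t1 ≠ σ w := fun h => A1.ne' (hσ h)
  have e2 : σ t2 ≠ σ w := fun h => A2.ne' (hσ h)
  have e3 : σ t3 ≠ σ w := fun h => A3.ne' (hσ h)
  have hq : ∃ q, T.Adj w q ∧ q ≠ v ∧ c q ≠ c w := by
    rcases lt_or_gt_of_ne e1 with s1 | s1 <;> rcases lt_or_gt_of_ne e2 with s2 | s2 <;>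
      rcases lt_or_gt_of_ne e3 with s3 | s3
    · exact pairAny t1 t2 A1 A2 n1 n2 d12 (Or.inl ⟨s1, s2⟩)
    · exact pairAny t1 t2 A1 A2 n1 n2 d12 (Or.inl ⟨s1, s2⟩)
    · exact pairAny t1 t3 A1 A3 n1 n3 d13 (Or.inl ⟨s1, s3⟩)
    · exact pairAny t2 t3 A2 A3 n2 n3 d23 (Or.inr ⟨s2, s3⟩)
    · exact pairAny t2 t3 A2 A3 n2 n3 d23 (Or.inl ⟨s2, s3⟩)
    · exact pairAny t1 t3 A1 A3 n1 n3 d13 (Or.inr ⟨s1, s3⟩)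
    · exact pairAny t1 t2 A1 A2 n1 n2 d12 (Or.inr ⟨s1, s2⟩)
    · exact pairAny t1 t2 A1 A2 n1 n2 d12 (Or.inr ⟨s1, s2⟩)
  obtain ⟨q, hwq, hqv, hqw⟩ := hq
  have hcq : c q = c v := class2 hc hqw (Ne.symm hcwv)
  have hqu : q ≠ u := fun h => hnwu (h ▸ hwq)
  have hqu' : q ≠ u' := fun h => hnwu' (h ▸ hwq)
  have hnvq : ¬T.Adj v q := by
    intro h
    rcases hnbr q h with rfl | rfl | rfl
    · exact hwq.ne rfl
    · exact hqu rfl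
    · exact hqu' rfl
  have g1 : σ q ≠ σ u := fun h => hqu (hσ h)
  have g2 : σ q ≠ σ v := fun h => hqv (hσ h)
  have g3 : σ q ≠ σ u' := fun h => hqu' (hσ h)
  rcases lt_or_gt_of_ne g1 with h1 | h1
  · -- q < u : triple (q, u, w)
    exact hnwu (R1 hsc h1 huw (hcq.trans hcu.symm) hwq)
  · rcases lt_or_gt_of_ne g2 with h2 | h2
    · -- u < q < v : triple (u, q, v)
      exact hnvq (R1 hsc h1 h2 (hcu.trans hcq.symm) Avu)
    · rcases lt_or_gt_of_ne g3 with h3 | h3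
      · -- v < q < u' : triple (v, q, u') then a square
        have hu'q := R1 hsc h2 h3 hcq.symm Avu'.symm
        exact no_square hA hwq hu'q.symm Avw.symm Avu' hqv
          (fun h => hu'S (h ▸ hwS))
      · -- u' < q : triple (w, u', q)
        exact hnwu' (R2 hsc hwu'σ h3 (hcu'.trans hcq.symm) hwq.symm)

/-- the full degree-3 lemma -/
lemma offpath_deg3 [Fintype V] (hA : T.IsAcyclic) (hσ : Function.Injective σ)
    (hc : ∀ v, c v < 2) (hsc : StronglyConsistent T σ c) (P : T.Walk m M)
    (hm : ∀ x, σ m ≤ σ x) (hM : ∀ x, σ x ≤ σ M)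
    {v : V} (hv : v ∉ P.support) (h3 : (T.neighborSet v).ncard = 3) :
    ∃ w' ∈ P.support, T.Adj v w' ∧ deg T w' ≤ 3 := by
  obtain ⟨a, b, d, hab, had, hbd, hset⟩ := Set.ncard_eq_three.mp h3
  have ha : T.Adj v a := by rw [← SimpleGraph.mem_neighborSet, hset]; simp
  have hb : T.Adj v b := by rw [← SimpleGraph.mem_neighborSet, hset]; simp
  have hd : T.Adj v d := by rw [← SimpleGraph.mem_neighborSet, hset]; simp
  have finish : ∀ w u1 u2 : V, T.neighborSet v = {w, u1, u2} → w ≠ u1 → w ≠ u2 →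
      u1 ≠ u2 → ¬Sp T P.support u1 → ¬Sp T P.support u2 →
      ∃ w' ∈ P.support, T.Adj v w' ∧ deg T w' ≤ 3 := by
    intro w u1 u2 hset' hwu1 hwu2 hu12 hN1 hN2
    have A1 : T.Adj v u1 := by rw [← SimpleGraph.mem_neighborSet, hset']; simp
    have A2 : T.Adj v u2 := by rw [← SimpleGraph.mem_neighborSet, hset']; simp
    obtain ⟨c1, h1S⟩ := not_sp hA hσ hc hsc P hm hM hv A1 hN1
    obtain ⟨c2, h2S⟩ := not_sp hA hσ hc hsc P hm hM hv A2 hN2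
    have e1 : σ u1 ≠ σ v := fun h => A1.ne' (hσ h)
    have e2 : σ u2 ≠ σ v := fun h => A2.ne' (hσ h)
    rcases lt_or_gt_of_ne e1 with s1 | s1 <;> rcases lt_or_gt_of_ne e2 with s2 | s2
    · exact (both_earlier hA hσ hsc hu12 A1 A2 c1 c2 s1 s2).elim
    · exact deg3_core hA hσ hc hsc P hm hM hv hset' hwu1 hwu2 hu12 c1 c2 h1S h2S s1 s2
    · have hperm : ({w, u1, u2} : Set V) = {w, u2, u1} := by
        ext x; simp; tauto
      exact deg3_core hA hσ hc hsc P hm hM hv (hset'.trans hperm) hwu2 hwu1 hu12.symm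
        c2 c1 h2S h1S s2 s1
    · exact (both_later hA hσ hsc hu12 A1 A2 c1 c2 s1 s2).elim
  by_cases sa : Sp T P.support a
  · exact finish a b d hset hab had hbd
      (fun s => hab (special_unique hA P hv ha hb sa s))
      (fun s => had (special_unique hA P hv ha hd sa s))
  · by_cases sb : Sp T P.support b
    · have hperm : ({a, b, d} : Set V) = {b, a, d} := by ext x; simp; tauto
      exact finish b a d (hset.trans hperm) hab.symm hbd had sa
        (fun s => hbd (special_unique hA P hv hb hd sb s))
    · by_cases sd : Sp T P.support d
      · have hperm : ({a, b, d} : Set V) = {d, a, b} := by ext x; simp; tauto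
        exact finish d a b (hset.trans hperm) had.symm hbd.symm hab sa sb
      · exfalso
        obtain ⟨c1, -⟩ := not_sp hA hσ hc hsc P hm hM hv ha sa
        obtain ⟨c2, -⟩ := not_sp hA hσ hc hsc P hm hM hv hb sb
        obtain ⟨c3, -⟩ := not_sp hA hσ hc hsc P hm hM hv hd sd
        have e1 : σ a ≠ σ v := fun h => ha.ne' (hσ h)
        have e2 : σ b ≠ σ v := fun h => hb.ne' (hσ h)
        have e3 : σ d ≠ σ v := fun h => hd.ne' (hσ h)
        rcases lt_or_gt_of_ne e1 with s1 | s1 <;> rcases lt_or_gt_of_ne e2 with s2 | s2 <;>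
          rcases lt_or_gt_of_ne e3 with s3 | s3
        · exact both_earlier hA hσ hsc hab ha hb c1 c2 s1 s2
        · exact both_earlier hA hσ hsc hab ha hb c1 c2 s1 s2
        · exact both_earlier hA hσ hsc had ha hd c1 c3 s1 s3
        · exact both_later hA hσ hsc hbd hb hd c2 c3 s2 s3
        · exact both_earlier hA hσ hsc hbd hb hd c2 c3 s2 s3
        · exact both_later hA hσ hsc had ha hd c1 c3 s1 s3
        · exact both_later hA hσ hsc hab ha hb c1 c2 s1 s2
        · exact both_later hA hσ hsc hab ha hb c1 c2 s1 s2

end Main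

end PthinAux
open PthinAux in
/-- In a tree with proper thinness 2, there is a simple path `C0` containing every
vertex of degree at least 4, such that every degree-3 vertex not on `C0` is adjacent to
a vertex of `C0` of degree at most 3. -/
theorem pthin_two_has_path {V : Type*} [Fintype V]
    (T : SimpleGraph V) (hT : T.IsTree) (h2 : pthin T = 2) :
    ∃ (a b : V) (C0 : T.Walk a b), C0.IsPath ∧
      (∀ x : V, 4 ≤ deg T x → x ∈ C0.support) ∧
      (∀ x : V, deg T x = 3 → x ∉ C0.support →
        ∃ w ∈ C0.support, T.Adj x w ∧ deg T w ≤ 3) := by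
  classical
  have hVne : Nonempty V := by
    by_contra h
    have he : IsEmpty V := not_nonempty_iff.mp h
    have h0 : ProperKThin T 0 :=
      ⟨fun _ => 0, fun _ => 0, fun a _ _ => he.elim a, fun v => he.elim v,
        fun r _ _ _ _ => he.elim r⟩
    have hle : pthin T ≤ 0 := Nat.sInf_le h0
    omega
  have hPK : ProperKThin T 2 := by
    have hne : {k | ProperKThin T k}.Nonempty := by
      by_contra h
      rw [Set.not_nonempty_iff_eq_empty] at h
      have : pthin T = 0 := by
        rw [pthin, h, Nat.sInf_empty]
      omega
    have h3 : pthin T ∈ {k | ProperKThin T k} := Nat.sInf_mem hne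
    rw [h2] at h3
    exact h3
  obtain ⟨σ, c, hσ, hc, hsc⟩ := hPK
  obtain ⟨m, -, hm⟩ := Finset.exists_min_image (Finset.univ : Finset V) σ
    ⟨Classical.arbitrary V, Finset.mem_univ _⟩
  obtain ⟨M, -, hM⟩ := Finset.exists_max_image (Finset.univ : Finset V) σ
    ⟨Classical.arbitrary V, Finset.mem_univ _⟩
  have hm' : ∀ x, σ m ≤ σ x := fun x => hm x (Finset.mem_univ x)
  have hM' : ∀ x, σ x ≤ σ M := fun x => hM x (Finset.mem_univ x)
  obtain ⟨W⟩ := hT.isConnected.preconnected m M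
  refine ⟨m, M, W.bypass, W.bypass_isPath, ?_, ?_⟩
  · intro x hx
    by_contra hxP
    exact offpath_deg4 hT.2 hσ hc hsc W.bypass hm' hM' hxP hx
  · intro x h3 hxP
    exact offpath_deg3 hT.2 hσ hc hsc W.bypass hm' hM' hxP h3
end
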